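/- arXiv:2303.13387 — 8 statements merged into one kernel-verified Lean document; each statement's English description precedes it below -/
import Mathlib

section
/- Let G be a group, A a subgroup of G, and γ : A → Aut(G) a function such that A is invariant under γ(A). Then any two of the following conditions imply the third: (1) γ([A, γ(A)]) = {1}; (2) γ is a homomorphism of groups; (3) γ satisfies the gamma functional equation γ(γ(h)(g) · h) = γ(g)γ(h) for all g, h ∈ A. -/
/-!
Write `[A, γ(A)]` for the subgroup generated by the `a⁻¹ γ_b(a)`. The factorisation
`γ_h(g) h = g · (g⁻¹ γ_h(g)) · h` puts an element of `[A, γ(A)]` between `g` and `h`, so a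
homomorphism killing `[A, γ(A)]` satisfies the GFE. Conversely the GFE applied to a pair `(g, y)`
with `γ(y) = 1` says that `γ` is invariant under right multiplication by `y`; since
`γ_b(a) b = a b y` with `y = b⁻¹ (a⁻¹ γ_b(a)) b ∈ [A, γ(A)]`, the GFE gives
`γ(a) γ(b) = γ(γ_b(a) b) = γ(a b)`. Finally, for a homomorphism the GFE reads
`γ(γ_b(a)) γ(b) = γ(a) γ(b)`, so each generator `a⁻¹ γ_b(a)` lies in the kernel of `γ`.
-/

section GammaFunction

variable {G : Type*} [Group G] {A : Subgroup G} (γ : A → MulAut G)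

def gammaCommutator : Subgroup G :=
  Subgroup.closure {g : G | ∃ a b : A, g = (a : G)⁻¹ * γ b (a : G)}

def KillsGammaCommutator : Prop :=
  ∀ x : A, (x : G) ∈ gammaCommutator γ → γ x = 1

def SatisfiesGFE : Prop :=
  ∀ g h : A, ∀ hm : γ h (g : G) * (h : G) ∈ A, γ ⟨γ h (g : G) * (h : G), hm⟩ = γ g * γ h

variable {γ}

theorem commutator_mem_gammaCommutator (a b : A) :
    (a : G)⁻¹ * γ b (a : G) ∈ gammaCommutator γ :=
  Subgroup.subset_closure ⟨a, b, rfl⟩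

theorem conj_commutator_mem_gammaCommutator (a b : A) :
    (b : G)⁻¹ * ((a : G)⁻¹ * γ b (a : G)) * b ∈ gammaCommutator γ := by
  have key : (b : G)⁻¹ * ((a : G)⁻¹ * γ b (a : G)) * b =
      ((a * b : A) : G)⁻¹ * γ b ((a * b : A) : G) * ((b : G)⁻¹ * γ b (b : G))⁻¹ := by
    simp only [Subgroup.coe_mul, map_mul]
    group
  rw [key]
  exact mul_mem (commutator_mem_gammaCommutator _ _)
    (inv_mem (commutator_mem_gammaCommutator _ _))

theorem SatisfiesGFE.apply (hγ : SatisfiesGFE γ) {g h p : A}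
    (hp : (p : G) = γ h (g : G) * (h : G)) : γ p = γ g * γ h := by
  have hm : γ h (g : G) * (h : G) ∈ A := hp ▸ p.2
  rw [show p = ⟨_, hm⟩ from Subtype.ext hp]
  exact hγ g h hm

theorem SatisfiesGFE.map_mul_of_map_eq_one (hγ : SatisfiesGFE γ) (g : A) {y : A}
    (hy : γ y = 1) : γ (g * y) = γ g := by
  rw [hγ.apply (g := g) (h := y) (by simp [hy]), hy, mul_one]

theorem satisfiesGFE_of_killsGammaCommutator_of_map_mul (hker : KillsGammaCommutator γ)
    (hmul : ∀ a b : A, γ (a * b) = γ a * γ b) : SatisfiesGFE γ := by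
  intro g h hm
  have hgh : γ h (g : G) ∈ A := by simpa using A.mul_mem hm (A.inv_mem h.2)
  let x : A := ⟨(g : G)⁻¹ * γ h (g : G), A.mul_mem (A.inv_mem g.2) hgh⟩
  have hx : γ x = 1 := hker x (commutator_mem_gammaCommutator g h)
  have hfactor : (⟨γ h (g : G) * (h : G), hm⟩ : A) = g * x * h :=
    Subtype.ext (by simp [x])
  rw [hfactor, hmul, hmul, hx, mul_one]

theorem map_mul_of_killsGammaCommutator_of_satisfiesGFE (hinv : ∀ a b : A, γ a (b : G) ∈ A)
    (hker : KillsGammaCommutator γ) (hγ : SatisfiesGFE γ) (a b : A) :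
    γ (a * b) = γ a * γ b := by
  let y : A := b⁻¹ * (a⁻¹ * ⟨γ b (a : G), hinv b a⟩) * b
  have hy : γ y = 1 := hker y (conj_commutator_mem_gammaCommutator a b)
  have hfactor : ((a * b * y : A) : G) = γ b (a : G) * (b : G) := by
    simp only [y, Subgroup.coe_mul, Subgroup.coe_inv]
    group
  rw [← hγ.map_mul_of_map_eq_one (a * b) hy, hγ.apply hfactor]

theorem killsGammaCommutator_of_map_mul_of_satisfiesGFE (hinv : ∀ a b : A, γ a (b : G) ∈ A)
    (hmul : ∀ a b : A, γ (a * b) = γ a * γ b) (hγ : SatisfiesGFE γ) :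
    KillsGammaCommutator γ := by
  let φ : A →* MulAut G := MonoidHom.mk' γ hmul
  have hle : gammaCommutator γ ≤ φ.ker.map A.subtype := by
    rw [gammaCommutator, Subgroup.closure_le]
    rintro _ ⟨a, b, rfl⟩
    let p : A := ⟨γ b (a : G), hinv b a⟩
    have hp : γ p = γ a := mul_right_cancel ((hmul p b).symm.trans (hγ.apply rfl))
    refine ⟨a⁻¹ * p, ?_, rfl⟩
    change φ (a⁻¹ * p) = 1
    rw [map_mul, map_inv]
    simp [φ, hp]
  intro x hx
  obtain ⟨k, hk, hkx⟩ := hle hx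
  rw [← Subtype.ext hkx]
  exact hk

end GammaFunction

/-- Two-out-of-three lemma for gamma functions: given a subgroup `A` of `G` and
`γ : A → Aut G` with `A` invariant under `γ(A)`, any two of
(1) `γ` kills `[A, γ(A)]`, (2) `γ` is a homomorphism, (3) `γ` satisfies the
gamma functional equation, imply the third. -/
theorem stmt0 {G : Type*} [Group G] (A : Subgroup G) (γ : A → MulAut G)
    (hinv : ∀ a b : A, γ a (b : G) ∈ A) :
    ((∀ x : A, (x : G) ∈ Subgroup.closure
        {g : G | ∃ a b : A, g = (a : G)⁻¹ * γ b (a : G)} → γ x = 1) →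
      (∀ a b : A, γ (a * b) = γ a * γ b) →
      (∀ g h : A, ∀ hm : γ h (g : G) * (h : G) ∈ A,
        γ ⟨γ h (g : G) * (h : G), hm⟩ = γ g * γ h)) ∧
    ((∀ x : A, (x : G) ∈ Subgroup.closure
        {g : G | ∃ a b : A, g = (a : G)⁻¹ * γ b (a : G)} → γ x = 1) →
      (∀ g h : A, ∀ hm : γ h (g : G) * (h : G) ∈ A,
        γ ⟨γ h (g : G) * (h : G), hm⟩ = γ g * γ h) →
      (∀ a b : A, γ (a * b) = γ a * γ b)) ∧
    ((∀ a b : A, γ (a * b) = γ a * γ b) →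
      (∀ g h : A, ∀ hm : γ h (g : G) * (h : G) ∈ A,
        γ ⟨γ h (g : G) * (h : G), hm⟩ = γ g * γ h) →
      (∀ x : A, (x : G) ∈ Subgroup.closure
        {g : G | ∃ a b : A, g = (a : G)⁻¹ * γ b (a : G)} → γ x = 1)) :=
  ⟨satisfiesGFE_of_killsGammaCommutator_of_map_mul,
    map_mul_of_killsGammaCommutator_of_satisfiesGFE hinv,
    killsGammaCommutator_of_map_mul_of_satisfiesGFE hinv⟩
end

section
/- Let G be a non-abelian group, C a non-trivial subgroup of G that is abelian, characteristic in G, and satisfies C ∩ Z(G) = {1}. Let γ : G → Aut(G) be a gamma function such that for every c ∈ C there exists σ(c) ∈ C with γ(c) = ι(σ(c)⁻¹) (conjugation by the inverse of σ(c)). Then σ : C → C is an endomorphism of C. -/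
/-!
Let `c, d ∈ C`. Since `C` is abelian, `γ(d) = ι(σ(d)⁻¹)` fixes `c`, so the gamma functional
equation with `g = c`, `h = d` collapses to `γ(cd) = γ(c)γ(d)`. Hence conjugation by `σ(cd)` and by
`σ(c)σ(d)` agree, i.e. `σ(cd) (σ(c)σ(d))⁻¹ ∈ C` is central, and `C ∩ Z(G) = 1` forces equality.
-/

namespace MulAut

variable {G : Type*} [Group G]

theorem conj_eq_one_iff_mem_center {x : G} : conj x = 1 ↔ x ∈ Subgroup.center G := by
  rw [Subgroup.mem_center_iff, MulEquiv.ext_iff]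
  refine forall_congr' fun g => ?_
  rw [conj_apply, one_apply, mul_inv_eq_iff_eq_mul, eq_comm]

theorem conj_injOn_of_inf_center_eq_bot {H : Subgroup G} (hH : H ⊓ Subgroup.center G = ⊥) :
    Set.InjOn (conj : G → MulAut G) H := by
  intro x hx y hy hxy
  have hcen : x * y⁻¹ ∈ Subgroup.center G := by
    rw [← conj_eq_one_iff_mem_center, map_mul, map_inv, hxy, mul_inv_cancel]
  have hbot : x * y⁻¹ ∈ H ⊓ Subgroup.center G := ⟨H.mul_mem hx (H.inv_mem hy), hcen⟩
  rw [hH, Subgroup.mem_bot] at hbot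
  exact mul_inv_eq_one.mp hbot

theorem conj_apply_eq_self_of_commute {x g : G} (h : Commute x g) : conj x g = g := by
  rw [conj_apply, h.eq, mul_inv_cancel_right]

end MulAut

theorem gamma_mul_of_apply_eq_self {G : Type*} [Group G] {γ : G → MulAut G}
    (hGFE : ∀ g h : G, γ (γ h g * h) = γ g * γ h) {g h : G} (hfix : γ h g = g) :
    γ (g * h) = γ g * γ h := by
  simpa only [hfix] using hGFE g h

theorem stmt3_general {G : Type*} [Group G]
    (C : Subgroup G)
    (habel : ∀ x ∈ C, ∀ y ∈ C, x * y = y * x)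
    (hz : C ⊓ Subgroup.center G = ⊥)
    (γ : G → MulAut G)
    (hGFE : ∀ g h : G, γ (γ h g * h) = γ g * γ h)
    (σ : C → C)
    (hσ : ∀ c : C, γ (c : G) = MulAut.conj ((σ c : G))) :
    ∀ c d : C, σ (c * d) = σ c * σ d := by
  intro c d
  have hfix : γ (d : G) (c : G) = (c : G) := by
    rw [hσ d]
    exact MulAut.conj_apply_eq_self_of_commute (habel _ (σ d).2 _ c.2)
  have hconj : MulAut.conj ((σ (c * d) : G)) = MulAut.conj ((σ c * σ d : C) : G) := by
    rw [← hσ, Subgroup.coe_mul, gamma_mul_of_apply_eq_self hGFE hfix, hσ, hσ,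
      Subgroup.coe_mul, map_mul]
  exact Subtype.ext (MulAut.conj_injOn_of_inf_center_eq_bot hz (σ _).2 (σ c * σ d).2 hconj)

/-- Duality lemma (first part): if `C` is a nontrivial abelian characteristic
subgroup of a non-abelian group `G` with `C ∩ Z(G) = 1`, `γ` is a gamma function
on `G`, and `γ(c) = ι(σ(c)⁻¹)` (conjugation, `ι(x) : g ↦ x⁻¹ g x`) for a
function `σ : C → C`, then `σ` is an endomorphism of `C`.
Note `ι(σ(c)⁻¹) = MulAut.conj (σ c)` since `MulAut.conj y : g ↦ y g y⁻¹`. -/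
theorem stmt3 {G : Type*} [Group G]
    (hna : ∃ a b : G, a * b ≠ b * a)
    (C : Subgroup G) (hC : C ≠ ⊥)
    (habel : ∀ x ∈ C, ∀ y ∈ C, x * y = y * x)
    [C.Characteristic]
    (hz : C ⊓ Subgroup.center G = ⊥)
    (γ : G → MulAut G)
    (hGFE : ∀ g h : G, γ (γ h g * h) = γ g * γ h)
    (σ : C → C)
    (hσ : ∀ c : C, γ (c : G) = MulAut.conj ((σ c : G))) :
    ∀ c d : C, σ (c * d) = σ c * σ d :=
  stmt3_general C habel hz γ hGFE σ hσ
end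

section
/- Let p be an odd prime and q a prime with q dividing p - 1, q > 2. A Sylow q-subgroup of GL(2, p) has order q^{2e} where q^e exactly divides p - 1, and GL(2, p) has exactly p(p+1)/2 Sylow q-subgroups, each isomorphic to C_{q^e} × C_{q^e}. -/
/-!
Let `S` be a Sylow `q`-subgroup of `Kˣ`; it is cyclic of order `q ^ n` with `q ^ n ∥ |K| - 1`.
As `q` is odd and divides `|K| - 1`, it divides neither `|K|` nor `|K| + 1`, so the `q`-part of
`|GL(2,K)| = (|K| - 1)² |K| (|K| + 1)` is `q ^ 2n`, and the diagonal matrices with entries in `S`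
form a Sylow subgroup `D ≅ S × S`, to which every Sylow `q`-subgroup is conjugate. Because `D`
contains a non-scalar matrix `diag(a, 1)`, its normalizer is the group of monomial matrices, of
order `2 (|K| - 1)²`, so the number of Sylow `q`-subgroups is its index `|K| (|K| + 1) / 2`.
-/

open Matrix Subgroup

lemma Nat.factorization_eq_of_pow_dvd_of_not_pow_succ_dvd {n q e : ℕ} (hq : q.Prime)
    (hn : n ≠ 0) (he : q ^ e ∣ n) (he' : ¬ q ^ (e + 1) ∣ n) : n.factorization q = e := by
  rw [hq.pow_dvd_iff_le_factorization hn] at he he'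
  omega

lemma Matrix.eq_zero_or_eq_of_mul_diagonal_eq_diagonal_mul {n R : Type*} [Fintype n]
    [DecidableEq n] [CommRing R] [NoZeroDivisors R] {A : Matrix n n R} {d x : n → R}
    (h : A * diagonal d = diagonal x * A) (i j : n) : A i j = 0 ∨ d j = x i := by
  have hij := congr_fun (congr_fun h i) j
  rw [mul_diagonal, diagonal_mul, mul_comm (x i), ← sub_eq_zero, ← mul_sub] at hij
  exact (mul_eq_zero.1 hij).imp_right sub_eq_zero.1

namespace GL2

variable {K : Type*} [Field K]

def diagHom : Kˣ × Kˣ →* GL (Fin 2) K where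
  toFun u := ⟨diagonal ![(u.1 : K), u.2], diagonal ![(u.1⁻¹ : K), u.2⁻¹],
    by ext i j; fin_cases i <;> fin_cases j <;> simp,
    by ext i j; fin_cases i <;> fin_cases j <;> simp⟩
  map_one' := by ext i j; fin_cases i <;> fin_cases j <;> simp
  map_mul' u v := by ext i j; fin_cases i <;> fin_cases j <;> simp [mul_comm]

@[simp]
lemma coe_diagHom (u : Kˣ × Kˣ) :
    (diagHom u : Matrix (Fin 2) (Fin 2) K) = diagonal ![(u.1 : K), u.2] := rfl

lemma diagHom_injective : Function.Injective (diagHom (K := K)) := by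
  intro u v h
  have h00 := congr_arg (fun g : GL (Fin 2) K => (g : Matrix (Fin 2) (Fin 2) K) 0 0) h
  have h11 := congr_arg (fun g : GL (Fin 2) K => (g : Matrix (Fin 2) (Fin 2) K) 1 1) h
  simp only [coe_diagHom, diagonal_apply_eq] at h00 h11
  ext <;> simp_all

def swapGL : GL (Fin 2) K :=
  ⟨!![0, 1; 1, 0], !![0, 1; 1, 0], by simp [one_fin_two], by simp [one_fin_two]⟩

@[simp]
lemma coe_swapGL : ((swapGL : GL (Fin 2) K) : Matrix (Fin 2) (Fin 2) K) = !![0, 1; 1, 0] := rfl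

lemma swapGL_mul_self : (swapGL : GL (Fin 2) K) * swapGL = 1 := by
  ext i j; fin_cases i <;> fin_cases j <;> simp

lemma swapGL_mul_diagHom (u : Kˣ × Kˣ) : swapGL * diagHom u = diagHom u.swap * swapGL := by
  ext i j; fin_cases i <;> fin_cases j <;> simp

lemma swapGL_inv : (swapGL : GL (Fin 2) K)⁻¹ = swapGL :=
  inv_eq_of_mul_eq_one_right swapGL_mul_self

lemma swapGL_conj_diagHom (u : Kˣ × Kˣ) : swapGL * diagHom u * swapGL⁻¹ = diagHom u.swap := by
  rw [swapGL_mul_diagHom, swapGL_inv, mul_assoc, swapGL_mul_self, mul_one]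

variable (K) in
def monomial : Subgroup (GL (Fin 2) K) where
  carrier := {g | ∃ u, g = diagHom u ∨ g = diagHom u * swapGL}
  one_mem' := ⟨1, .inl (map_one _).symm⟩
  mul_mem' := by
    rintro _ _ ⟨u, rfl | rfl⟩ ⟨v, rfl | rfl⟩
    · exact ⟨u * v, .inl (map_mul ..).symm⟩
    · exact ⟨u * v, .inr (by rw [map_mul, mul_assoc])⟩
    · exact ⟨u * v.swap, .inr (by rw [map_mul, mul_assoc, mul_assoc, swapGL_mul_diagHom])⟩
    · refine ⟨u * v.swap, .inl ?_⟩
      rw [map_mul, mul_assoc, ← mul_assoc swapGL, swapGL_mul_diagHom, mul_assoc, swapGL_mul_self,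
        mul_one]
  inv_mem' := by
    rintro _ ⟨u, rfl | rfl⟩
    · exact ⟨u⁻¹, .inl (map_inv ..).symm⟩
    · refine ⟨u⁻¹.swap, .inr ?_⟩
      rw [_root_.mul_inv_rev, swapGL_inv, ← map_inv, swapGL_mul_diagHom]

lemma card_monomial [Finite K] : Nat.card (monomial K) = 2 * Nat.card Kˣ ^ 2 := by
  let f : (Kˣ × Kˣ) ⊕ (Kˣ × Kˣ) → monomial K :=
    Sum.elim (fun u => ⟨diagHom u, u, .inl rfl⟩)
      (fun u => ⟨diagHom u * swapGL, u, .inr rfl⟩)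
  have diag_ne (u v : Kˣ × Kˣ) : diagHom u ≠ diagHom v * swapGL := fun h => by
    simpa using congr_arg (fun g : GL (Fin 2) K => (g : Matrix (Fin 2) (Fin 2) K) 0 0) h
  have hf : Function.Bijective f := by
    refine ⟨?_, ?_⟩
    · rintro (u | u) (v | v) h <;>
        simp only [f, Sum.elim_inl, Sum.elim_inr, Subtype.ext_iff] at h
      · rw [diagHom_injective h]
      · exact (diag_ne u v h).elim
      · exact (diag_ne v u h.symm).elim
      · rw [diagHom_injective (mul_right_cancel h)]
    · rintro ⟨_, u, rfl | rfl⟩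
      exacts [⟨.inl u, rfl⟩, ⟨.inr u, rfl⟩]
  rw [← Nat.card_congr (Equiv.ofBijective f hf), Nat.card_sum, Nat.card_prod]
  ring

lemma mem_monomial_of_forall_row_eq_zero {g : GL (Fin 2) K}
    (hg : ∀ i, (g : Matrix (Fin 2) (Fin 2) K) i 0 = 0 ∨
      (g : Matrix (Fin 2) (Fin 2) K) i 1 = 0) :
    g ∈ monomial K := by
  set A := (g : Matrix (Fin 2) (Fin 2) K) with hA
  have hdet : A 0 0 * A 1 1 - A 0 1 * A 1 0 ≠ 0 := by
    rw [← det_fin_two]; exact g.isUnit.map detMonoidHom |>.ne_zero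
  rcases hg 0 with h00 | h01
  · have h10 : A 1 0 ≠ 0 := fun h => hdet (by simp [h00, h])
    have h01 : A 0 1 ≠ 0 := fun h => hdet (by simp [h00, h])
    have h11 : A 1 1 = 0 := (hg 1).resolve_left h10
    refine ⟨(Units.mk0 _ h01, Units.mk0 _ h10), .inr ?_⟩
    ext i j; fin_cases i <;> fin_cases j <;> simp [← hA, h00, h11]
  · have h00 : A 0 0 ≠ 0 := fun h => hdet (by simp [h01, h])
    have h11 : A 1 1 ≠ 0 := fun h => hdet (by simp [h01, h])
    have h10 : A 1 0 = 0 := (hg 1).resolve_right h11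
    refine ⟨(Units.mk0 _ h00, Units.mk0 _ h11), .inl ?_⟩
    ext i j; fin_cases i <;> fin_cases j <;> simp [← hA, h01, h10]

def diagSubgroup (S : Subgroup Kˣ) : Subgroup (GL (Fin 2) K) := (S.prod S).map diagHom

lemma swapGL_mem_normalizer (S : Subgroup Kˣ) :
    swapGL ∈ normalizer (diagSubgroup S : Set (GL (Fin 2) K)) := by
  have conj_mem : ∀ h ∈ diagSubgroup S, swapGL * h * swapGL⁻¹ ∈ diagSubgroup S := by
    rintro _ ⟨v, hv, rfl⟩
    exact ⟨v.swap, ⟨hv.2, hv.1⟩, (swapGL_conj_diagHom v).symm⟩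
  refine mem_normalizer_iff.2 fun h => ⟨conj_mem h, fun hh => ?_⟩
  have hconj := conj_mem _ hh
  simp only [swapGL_inv, ← mul_assoc, swapGL_mul_self, one_mul] at hconj
  rwa [mul_assoc, swapGL_mul_self, mul_one] at hconj

lemma monomial_le_normalizer (S : Subgroup Kˣ) :
    monomial K ≤ normalizer (diagSubgroup S : Set (GL (Fin 2) K)) := by
  have diag_mem (u : Kˣ × Kˣ) : diagHom u ∈ normalizer (diagSubgroup S : Set (GL (Fin 2) K)) :=
    le_normalizer_map (H := S.prod S) diagHom ⟨u, by rw [normalizer_eq_top]; trivial, rfl⟩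
  rintro _ ⟨u, rfl | rfl⟩
  exacts [diag_mem u, mul_mem (diag_mem u) (swapGL_mem_normalizer S)]

lemma normalizer_diagSubgroup {S : Subgroup Kˣ} (hS : S ≠ ⊥) :
    normalizer (diagSubgroup S : Set (GL (Fin 2) K)) = monomial K := by
  refine le_antisymm (fun g hg => ?_) (monomial_le_normalizer S)
  obtain ⟨a, ha, ha1⟩ := S.bot_or_exists_ne_one.resolve_left hS
  obtain ⟨v, -, hv⟩ :=
    (mem_normalizer_iff.1 hg (diagHom (a, 1))).1 (mem_map_of_mem _ ⟨ha, S.one_mem⟩)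
  have hcomm : (g : Matrix (Fin 2) (Fin 2) K) * diagonal ![(a : K), 1] =
      diagonal ![(v.1 : K), v.2] * g := by
    simpa using (congr_arg Units.val (eq_mul_inv_iff_mul_eq.1 hv)).symm
  -- a row of `g` with two nonzero entries would force `a = 1` by comparing entries in `hcomm`
  refine mem_monomial_of_forall_row_eq_zero fun i => ?_
  by_contra! h
  have h0 := (eq_zero_or_eq_of_mul_diagonal_eq_diagonal_mul hcomm i 0).resolve_left h.1
  have h1 := (eq_zero_or_eq_of_mul_diagonal_eq_diagonal_mul hcomm i 1).resolve_left h.2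
  exact ha1 (Units.val_eq_one.1 (by simpa using h0.trans h1.symm))

noncomputable def diagSubgroupEquiv (S : Subgroup Kˣ) : diagSubgroup S ≃* S × S :=
  (equivMapOfInjective _ diagHom diagHom_injective).symm.trans (prodEquiv S S)

lemma card_diagSubgroup (S : Subgroup Kˣ) : Nat.card (diagSubgroup S) = Nat.card S ^ 2 := by
  rw [Nat.card_congr (diagSubgroupEquiv S).toEquiv, Nat.card_prod, sq]

section FiniteField

variable [Finite K]

lemma card_GL_fin_two :
    Nat.card (GL (Fin 2) K) = (Nat.card K - 1) ^ 2 * (Nat.card K * (Nat.card K + 1)) := by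
  have := Fintype.ofFinite K
  rw [card_GL_field, Fin.prod_univ_two, ← Nat.card_eq_fintype_card]
  obtain ⟨r, hr⟩ : ∃ r, Nat.card K = r + 1 :=
    ⟨_, (Nat.succ_pred_eq_of_pos Nat.card_pos).symm⟩
  rw [hr, Fin.val_zero, Fin.val_one, pow_zero, pow_one, Nat.add_sub_cancel,
    Nat.sub_eq_of_eq_add (show (r + 1) ^ 2 = r * (r + 2) + 1 by ring),
    Nat.sub_eq_of_eq_add (show (r + 1) ^ 2 = r * (r + 1) + (r + 1) by ring)]
  ring

lemma index_monomial : (monomial K).index = Nat.card K * (Nat.card K + 1) / 2 := by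
  have h := card_mul_index (monomial K)
  rw [card_monomial, Nat.card_units, card_GL_fin_two] at h
  have hpos : 0 < (Nat.card K - 1) ^ 2 :=
    pow_pos (by have := Finite.one_lt_card (α := K); omega) 2
  have : 2 * (monomial K).index = Nat.card K * (Nat.card K + 1) :=
    Nat.eq_of_mul_eq_mul_left hpos (by rw [← h]; ring)
  omega

variable {q : ℕ} [Fact q.Prime]

lemma factorization_card_GL_fin_two (hq2 : q ≠ 2) (hqK : q ∣ Nat.card K - 1) :
    (Nat.card (GL (Fin 2) K)).factorization q = 2 * (Nat.card K - 1).factorization q := by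
  have hK := Finite.one_lt_card (α := K)
  have hq := Fact.out (p := q.Prime)
  have not_dvd_card : ¬ q ∣ Nat.card K := fun h =>
    hq.not_dvd_one (by simpa [Nat.sub_sub_self hK.le] using Nat.dvd_sub h hqK)
  have not_dvd_succ : ¬ q ∣ Nat.card K + 1 := fun h =>
    hq2 ((Nat.prime_dvd_prime_iff_eq hq Nat.prime_two).1 (by
      simpa [show Nat.card K + 1 - (Nat.card K - 1) = 2 by omega] using Nat.dvd_sub h hqK))
  rw [card_GL_fin_two, Nat.factorization_mul (pow_ne_zero _ (by omega)) (by positivity),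
    Nat.factorization_mul (by omega) (by omega), Nat.factorization_pow]
  simp [Nat.factorization_eq_zero_of_not_dvd not_dvd_card,
    Nat.factorization_eq_zero_of_not_dvd not_dvd_succ]

def diagSylow (hq2 : q ≠ 2) (hqK : q ∣ Nat.card K - 1) (S : Sylow q Kˣ) :
    Sylow q (GL (Fin 2) K) :=
  Sylow.ofCard (diagSubgroup S) (by
    rw [card_diagSubgroup, S.card_eq_multiplicity, Nat.card_units,
      factorization_card_GL_fin_two hq2 hqK, ← pow_mul, mul_comm])

lemma coe_diagSylow (hq2 : q ≠ 2) (hqK : q ∣ Nat.card K - 1) (S : Sylow q Kˣ) :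
    (diagSylow hq2 hqK S : Subgroup (GL (Fin 2) K)) = diagSubgroup S :=
  Sylow.coe_ofCard _ _

theorem nonempty_mulEquiv_sylow (hq2 : q ≠ 2) (hqK : q ∣ Nat.card K - 1)
    (P : Sylow q (GL (Fin 2) K)) :
    Nonempty (P ≃* Multiplicative (ZMod (q ^ (Nat.card K - 1).factorization q)) ×
      Multiplicative (ZMod (q ^ (Nat.card K - 1).factorization q))) := by
  obtain ⟨S⟩ : Nonempty (Sylow q Kˣ) := inferInstance
  have eS : S ≃* Multiplicative (ZMod (q ^ (Nat.card K - 1).factorization q)) :=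
    mulEquivOfCyclicCardEq (by
      rw [S.card_eq_multiplicity, Nat.card_units, Nat.card_congr Multiplicative.toAdd,
        Nat.card_zmod])
  have eP :=
    (P.equiv (diagSylow hq2 hqK S)).trans (MulEquiv.subgroupCongr (coe_diagSylow hq2 hqK S))
  have eD := (diagSubgroupEquiv (S : Subgroup Kˣ)).trans (eS.prodCongr eS)
  exact ⟨eP.trans eD⟩

theorem card_sylow_GL_fin_two (hq2 : q ≠ 2) (hqK : q ∣ Nat.card K - 1) :
    Nat.card (Sylow q (GL (Fin 2) K)) = Nat.card K * (Nat.card K + 1) / 2 := by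
  obtain ⟨S⟩ : Nonempty (Sylow q Kˣ) := inferInstance
  have hS : (S : Subgroup Kˣ) ≠ ⊥ := S.ne_bot_of_dvd_card (by rwa [Nat.card_units])
  have hD : (diagSylow hq2 hqK S : Set (GL (Fin 2) K)) =
      (diagSubgroup (S : Subgroup Kˣ) : Set (GL (Fin 2) K)) := by
    rw [← coe_diagSylow hq2 hqK S]; rfl
  rw [Sylow.card_eq_index_normalizer (diagSylow hq2 hqK S), hD, normalizer_diagSubgroup hS,
    index_monomial]

end FiniteField

end GL2

theorem stmt5_general {p q e : ℕ} [Fact p.Prime]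
    (hq : q.Prime) (hq2 : 2 < q) (hqp : q ∣ p - 1)
    (he : q ^ e ∣ p - 1) (he' : ¬ q ^ (e + 1) ∣ p - 1) :
    (∀ P : Sylow q (GL (Fin 2) (ZMod p)),
      Nat.card (P : Subgroup (GL (Fin 2) (ZMod p))) = q ^ (2 * e) ∧
      Nonempty ((P : Subgroup (GL (Fin 2) (ZMod p))) ≃*
        Multiplicative (ZMod (q ^ e)) × Multiplicative (ZMod (q ^ e)))) ∧
    Nat.card (Sylow q (GL (Fin 2) (ZMod p))) = p * (p + 1) / 2 := by
  have := Fact.mk hq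
  have hqK : q ∣ Nat.card (ZMod p) - 1 := by rwa [Nat.card_zmod]
  have hfact : (Nat.card (ZMod p) - 1).factorization q = e := by
    rw [Nat.card_zmod]
    exact Nat.factorization_eq_of_pow_dvd_of_not_pow_succ_dvd hq
      (Nat.sub_ne_zero_of_lt (Fact.out : p.Prime).one_lt) he he'
  refine ⟨fun P => ?_, by simpa using GL2.card_sylow_GL_fin_two hq2.ne' hqK⟩
  obtain ⟨φ⟩ := hfact ▸ GL2.nonempty_mulEquiv_sylow hq2.ne' hqK P
  refine ⟨?_, ⟨φ⟩⟩
  rw [Nat.card_congr φ.toEquiv, Nat.card_prod, Nat.card_congr Multiplicative.toAdd, Nat.card_zmod,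
    ← pow_add, two_mul]

/-- Sylow `q`-subgroups of `GL(2,p)` for `q > 2` a prime dividing `p - 1` with
`q^e ∥ p - 1`: each has order `q^{2e}` and is isomorphic to `C_{q^e} × C_{q^e}`,
and there are exactly `p(p+1)/2` of them. -/
theorem stmt5 {p q e : ℕ} [Fact p.Prime] (hp2 : 2 < p)
    (hq : q.Prime) (hq2 : 2 < q) (hqp : q ∣ p - 1)
    (he : q ^ e ∣ p - 1) (he' : ¬ q ^ (e + 1) ∣ p - 1) :
    (∀ P : Sylow q (GL (Fin 2) (ZMod p)),
      Nat.card (P : Subgroup (GL (Fin 2) (ZMod p))) = q ^ (2 * e) ∧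
      Nonempty ((P : Subgroup (GL (Fin 2) (ZMod p))) ≃*
        Multiplicative (ZMod (q ^ e)) × Multiplicative (ZMod (q ^ e)))) ∧
    Nat.card (Sylow q (GL (Fin 2) (ZMod p))) = p * (p + 1) / 2 :=
  stmt5_general hq hq2 hqp he he'
end

section
/- Let p be an odd prime and q > 2 a prime dividing p - 1, with q^e exactly dividing p - 1. Then the number of elements of order q in GL(2, p) equals (q² - q)·p(p+1)/2 + q - 1. -/
/-! An element of `GL(2, p)` of prime order `q` is a matrix `A ≠ 1` with `A ^ q = 1`. Since
`q ∣ p - 1`, the polynomial `X ^ q - 1` is a product of `q` distinct linear factors over `𝔽_p`,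
hence so is the minimal polynomial of any such `A`: it is `∏_{a ∈ s} (X - a)` for a set `s` of
`q`-th roots of unity with `|s| ≤ 2`. If `|s| = 1`, `A` is one of the `q` scalar roots of unity.
If `s = {a, b}`, the minimal polynomial is also the characteristic polynomial, and conversely
every `A` with trace `a + b` and determinant `a b` satisfies `A ^ q = 1`; there are `p (p + 1)`
such matrices. So `A ^ q = 1` has `q + C(q, 2) p (p + 1)` solutions, one of which is `1`. -/

open Polynomial Finset

theorem Polynomial.Monic.exists_subset_eq_prod_X_sub_C_of_dvd {K : Type*} [Field K] {f : K[X]}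
    (hf : f.Monic) {t : Finset K} (hdvd : f ∣ ∏ a ∈ t, (X - C a)) :
    ∃ s ⊆ t, f = ∏ a ∈ s, (X - C a) := by
  have hg0 : ∏ a ∈ t, (X - C a) ≠ 0 := (monic_prod_X_sub_C id t).ne_zero
  have hsplit : f.Splits :=
    (splits_prod_iff (fun a _ => X_sub_C_ne_zero a)).2 (fun a _ => Splits.X_sub_C a)
      |>.of_dvd hg0 hdvd
  have hle : f.roots ≤ t.val := roots_prod_X_sub_C t ▸ roots.le_of_dvd hg0 hdvd
  refine ⟨⟨f.roots, Multiset.nodup_of_le hle t.nodup⟩, fun a ha => Multiset.mem_of_le hle ha, ?_⟩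
  exact hsplit.eq_prod_roots_of_monic hf

theorem minpoly_eq_prod_of_pow_eq_one {K A : Type*} [Field K] [Ring A] [Algebra K A]
    {ζ : K} {q : ℕ} (hζ : IsPrimitiveRoot ζ q) (hq : 0 < q) {x : A} (hx : x ^ q = 1) :
    ∃ s ⊆ nthRootsFinset q (1 : K), minpoly K x = ∏ a ∈ s, (X - C a) := by
  have hint : IsIntegral K x := .of_pow hq (hx ▸ isIntegral_one)
  refine (minpoly.monic hint).exists_subset_eq_prod_X_sub_C_of_dvd ?_
  rw [← X_pow_sub_one_eq_prod hq hζ]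
  exact minpoly.dvd K x (by simp [hx])

theorem FiniteField.exists_isPrimitiveRoot_of_prime_dvd {K : Type*} [Field K] [Fintype K] {q : ℕ}
    (hq : q.Prime) (hqK : q ∣ Fintype.card K - 1) : ∃ ζ : K, IsPrimitiveRoot ζ q := by
  classical
  have := Fact.mk hq
  obtain ⟨u, hu⟩ := exists_prime_orderOf_dvd_card (G := Kˣ) q (by rwa [Fintype.card_units])
  exact ⟨u, IsPrimitiveRoot.coe_units_iff.2 (hu ▸ IsPrimitiveRoot.orderOf u)⟩

theorem Units.natCard_pow_eq_one {M : Type*} [Monoid M] {n : ℕ} (hn : n ≠ 0) :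
    Nat.card {x : Mˣ // x ^ n = 1} = Nat.card {a : M // a ^ n = 1} :=
  Nat.card_congr
    { toFun := fun x => ⟨x.1, by rw [← Units.val_pow_eq_pow_val, x.2, Units.val_one]⟩
      invFun := fun a => ⟨Units.ofPowEqOne a n a.2 hn, Units.pow_ofPowEqOne a.2 hn⟩
      left_inv := fun x => Subtype.ext (Units.ext rfl)
      right_inv := fun a => rfl }

theorem Units.natCard_orderOf_eq_prime_add_one {M : Type*} [Monoid M] [Finite M] {q : ℕ}
    (hq : q.Prime) :
    Nat.card {x : Mˣ | orderOf x = q} + 1 = Nat.card {a : M // a ^ q = 1} := by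
  have := Fact.mk hq
  have hset : {x : Mˣ | orderOf x = q} = {x | x ^ q = 1} \ {1} := by
    ext x
    simp [orderOf_eq_prime_iff]
  rw [← Units.natCard_pow_eq_one hq.ne_zero, hset, Nat.card_coe_set_eq,
    Set.ncard_sdiff_singleton_add_one (by simp) (Set.toFinite _), ← Nat.card_coe_set_eq]
  rfl

namespace Matrix

theorem charpoly_algebraMap {R n : Type*} [CommRing R] [Fintype n] [DecidableEq n] (c : R) :
    (algebraMap R (Matrix n n R) c).charpoly = (X - C c) ^ Fintype.card n := by
  simp [algebraMap_eq_diagonal, charpoly_diagonal]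

theorem charpoly_eq_X_sub_C_mul_X_sub_C_iff {R : Type*} [CommRing R] [Nontrivial R]
    (A : Matrix (Fin 2) (Fin 2) R) (a b : R) :
    A.charpoly = (X - C a) * (X - C b) ↔ A.trace = a + b ∧ A.det = a * b := by
  have hprod : (X - C a) * (X - C b) = X ^ 2 - C (a + b) * X + C (a * b) := by
    simp only [C_add, C_mul]; ring
  rw [A.charpoly_fin_two, hprod]
  refine ⟨fun h => ⟨?_, ?_⟩, fun ⟨ht, hd⟩ => by rw [ht, hd]⟩
  · simpa [add_comm] using congrArg (-coeff · 1) h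
  · simpa using congrArg (coeff · 0) h

theorem pow_eq_one_and_not_mem_range_algebraMap_iff {K : Type*} [Field K] {ζ : K} {q : ℕ}
    (hζ : IsPrimitiveRoot ζ q) (hq : 0 < q) (A : Matrix (Fin 2) (Fin 2) K) :
    A ^ q = 1 ∧ A ∉ Set.range (algebraMap K _) ↔
      ∃ s ∈ (nthRootsFinset q (1 : K)).powersetCard 2, A.charpoly = ∏ a ∈ s, (X - C a) := by
  constructor
  · rintro ⟨hA, hns⟩
    have hint : IsIntegral K A := A.isIntegral
    obtain ⟨s, hs, hm⟩ := minpoly_eq_prod_of_pow_eq_one hζ hq hA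
    have hdeg : (minpoly K A).natDegree = #s := by rw [hm, natDegree_finsetProd_X_sub_C_eq_card]
    have hle : #s ≤ 2 := by
      simpa [hdeg] using natDegree_le_of_dvd (minpoly_dvd_charpoly A) (charpoly_monic A).ne_zero
    have hge : 2 ≤ #s := hdeg ▸ (minpoly.two_le_natDegree_iff hint).2 hns
    refine ⟨s, mem_powersetCard.2 ⟨hs, le_antisymm hle hge⟩, ?_⟩
    rw [← hm]
    exact eq_of_monic_of_dvd_of_natDegree_le (minpoly.monic hint) (charpoly_monic A)
      (minpoly_dvd_charpoly A) (by simp [hdeg, hge])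
  · rintro ⟨s, hs, hcp⟩
    rw [mem_powersetCard] at hs
    obtain ⟨hsR, hcard⟩ := hs
    refine ⟨?_, ?_⟩
    · have hdvd : A.charpoly ∣ X ^ q - 1 := by
        rw [hcp, X_pow_sub_one_eq_prod hq hζ]
        exact prod_dvd_prod_of_subset _ _ _ hsR
      simpa [sub_eq_zero] using aeval_eq_zero_of_dvd_aeval_eq_zero hdvd (aeval_self_charpoly A)
    · rintro ⟨c, rfl⟩
      classical
      obtain ⟨a, b, hab, rfl⟩ := card_eq_two.1 hcard
      rw [charpoly_algebraMap, Fintype.card_fin, prod_pair hab] at hcp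
      have ha := congrArg (eval a) hcp
      have hb := congrArg (eval b) hcp
      simp only [eval_pow, eval_mul, eval_sub, eval_X, eval_C, sub_self, zero_mul, mul_zero,
        pow_eq_zero_iff two_ne_zero, sub_eq_zero] at ha hb
      exact hab (ha.trans hb.symm)

end Matrix

section FiniteField

variable {K : Type*} [Field K] [Fintype K] [DecidableEq K]

theorem card_filter_mul_eq (c : K) :
    #{v : K × K | v.1 * v.2 = c} = (Fintype.card K - 1) + if c = 0 then Fintype.card K else 0 := by
  rw [card_filter, Fintype.sum_prod_type, Fintype.sum_eq_add_sum_compl 0]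
  have hunit : ∀ y ∈ ({0}ᶜ : Finset K), (∑ z : K, if y * z = c then 1 else 0) = 1 := by
    intro y hy
    have hy : y ≠ 0 := by simpa using hy
    simp_rw [← eq_inv_mul_iff_mul_eq₀ hy]
    simp
  rw [sum_congr rfl hunit]
  simp [card_compl, add_comm, eq_comm (a := (0 : K))]

theorem card_filter_trace_eq_det_eq {a b : K} (hab : a ≠ b) :
    #{A : Matrix (Fin 2) (Fin 2) K | A.trace = a + b ∧ A.det = a * b}
      = Fintype.card K * (Fintype.card K + 1) := by
  -- `!![x, y; z, a + b - x]` has determinant `a * b` iff `y * z = (x - a) * (b - x)`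
  let e : {A : Matrix (Fin 2) (Fin 2) K // A.trace = a + b ∧ A.det = a * b} ≃
      {v : K × K × K // v.2.1 * v.2.2 = (v.1 - a) * (b - v.1)} :=
    { toFun := fun A => ⟨(A.1 0 0, A.1 0 1, A.1 1 0), by
        obtain ⟨ht, hd⟩ := A.2
        rw [Matrix.trace_fin_two] at ht
        rw [Matrix.det_fin_two] at hd
        linear_combination A.1 0 0 * ht - hd⟩
      invFun := fun v => ⟨!![v.1.1, v.1.2.1; v.1.2.2, a + b - v.1.1], by
        simp only [Matrix.trace_fin_two_of, Matrix.det_fin_two_of]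
        constructor
        · ring
        · linear_combination -v.2⟩
      left_inv := fun A => by
        obtain ⟨A, ht, -⟩ := A
        ext i j
        rw [Matrix.trace_fin_two] at ht
        fin_cases i <;> fin_cases j <;> simp [← ht]
      right_inv := fun v => rfl }
  rw [← Fintype.card_subtype, Fintype.card_congr e, Fintype.card_subtype, card_filter,
    Fintype.sum_prod_type]
  simp only [← card_filter, card_filter_mul_eq, sum_add_distrib, sum_const, card_univ, smul_eq_mul,
    mul_eq_zero, sub_eq_zero]
  have hroots : ({x | x = a ∨ b = x} : Finset K) = {a, b} := by
    ext x
    simp [eq_comm (a := b)]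
  rw [← sum_filter, hroots, sum_pair hab]
  obtain ⟨m, hm⟩ := Nat.exists_eq_add_one.2 (Fintype.card_pos (α := K))
  rw [hm, Nat.add_sub_cancel]
  ring

variable {ζ : K} {q : ℕ}

theorem card_filter_pow_eq_one_and_mem_range_algebraMap (hζ : IsPrimitiveRoot ζ q) (hq : 0 < q) :
    #{A : Matrix (Fin 2) (Fin 2) K | A ^ q = 1 ∧ A ∈ Set.range (algebraMap K _)} = q := by
  have hscalar : ({A | A ^ q = 1 ∧ A ∈ Set.range (algebraMap K _)} :
      Finset (Matrix (Fin 2) (Fin 2) K))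
      = (nthRootsFinset q (1 : K)).map ⟨algebraMap K _, (algebraMap K _).injective⟩ := by
    ext A
    simp only [mem_filter, mem_univ, true_and, mem_map, mem_nthRootsFinset hq,
      Function.Embedding.coeFn_mk]
    constructor
    · rintro ⟨hA, c, rfl⟩
      exact ⟨c, (algebraMap K (Matrix (Fin 2) (Fin 2) K)).injective (by rw [map_pow, hA, map_one]),
        rfl⟩
    · rintro ⟨c, hc, rfl⟩
      exact ⟨by rw [← map_pow, hc, map_one], c, rfl⟩
  rw [hscalar, card_map, hζ.card_nthRootsFinset]

theorem card_filter_pow_eq_one_and_not_mem_range_algebraMap (hζ : IsPrimitiveRoot ζ q)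
    (hq : 0 < q) :
    #{A : Matrix (Fin 2) (Fin 2) K | A ^ q = 1 ∧ A ∉ Set.range (algebraMap K _)}
      = q.choose 2 * (Fintype.card K * (Fintype.card K + 1)) := by
  have hunion : ({A | A ^ q = 1 ∧ A ∉ Set.range (algebraMap K _)} :
      Finset (Matrix (Fin 2) (Fin 2) K)) = ((nthRootsFinset q (1 : K)).powersetCard 2).biUnion
        fun s => {A | A.charpoly = ∏ a ∈ s, (X - C a)} := by
    ext A
    simp only [mem_filter, mem_univ, true_and, mem_biUnion]
    exact Matrix.pow_eq_one_and_not_mem_range_algebraMap_iff hζ hq A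
  have hdisj : ((nthRootsFinset q (1 : K)).powersetCard 2 : Set (Finset K)).PairwiseDisjoint
      fun s => ({A | A.charpoly = ∏ a ∈ s, (X - C a)} : Finset (Matrix (Fin 2) (Fin 2) K)) := by
    intro s _ t _ hst
    refine disjoint_filter.2 fun A _ hs ht => hst ?_
    rw [← val_inj, ← roots_prod_X_sub_C s, ← roots_prod_X_sub_C t, ← hs, ← ht]
  rw [hunion, card_biUnion hdisj, sum_const_nat, card_powersetCard, hζ.card_nthRootsFinset]
  intro s hs
  obtain ⟨a, b, hab, rfl⟩ := card_eq_two.1 (mem_powersetCard.1 hs).2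
  simp_rw [prod_pair hab, Matrix.charpoly_eq_X_sub_C_mul_X_sub_C_iff]
  exact card_filter_trace_eq_det_eq hab

theorem card_filter_pow_eq_one (hζ : IsPrimitiveRoot ζ q) (hq : 0 < q) :
    #{A : Matrix (Fin 2) (Fin 2) K | A ^ q = 1}
      = q + q.choose 2 * (Fintype.card K * (Fintype.card K + 1)) := by
  rw [← card_filter_add_card_filter_not (· ∈ Set.range (algebraMap K _)), filter_filter,
    filter_filter, card_filter_pow_eq_one_and_mem_range_algebraMap hζ hq,
    card_filter_pow_eq_one_and_not_mem_range_algebraMap hζ hq]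

end FiniteField

theorem stmt6_general {p q : ℕ} [Fact p.Prime]
    (hq : q.Prime) (hqp : q ∣ p - 1) :
    Nat.card {x : GL (Fin 2) (ZMod p) | orderOf x = q}
      = (q ^ 2 - q) * (p * (p + 1) / 2) + q - 1 := by
  obtain ⟨ζ, hζ⟩ := FiniteField.exists_isPrimitiveRoot_of_prime_dvd (K := ZMod p) hq
    (by rwa [ZMod.card])
  have hmat : Nat.card {A : Matrix (Fin 2) (Fin 2) (ZMod p) // A ^ q = 1}
      = q + q.choose 2 * (p * (p + 1)) := by
    rw [Nat.card_eq_fintype_card, Fintype.card_subtype, card_filter_pow_eq_one hζ hq.pos,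
      ZMod.card]
  have hcount : Nat.card {x : GL (Fin 2) (ZMod p) | orderOf x = q} + 1 = _ :=
    Units.natCard_orderOf_eq_prime_add_one hq
  have hchoose : q.choose 2 * (p * (p + 1)) = (q ^ 2 - q) * (p * (p + 1) / 2) := by
    obtain ⟨a, ha⟩ := (Nat.even_mul_pred_self q).two_dvd
    obtain ⟨b, hb⟩ := (Nat.even_mul_succ_self p).two_dvd
    rw [Nat.choose_two_right, sq, ← Nat.mul_sub_one, ha, hb]
    simp only [Nat.mul_div_cancel_left _ two_pos]
    ring
  have := hq.pos
  omega

/-- The number of elements of order `q` in `GL(2,p)`, for `q > 2` a prime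
dividing `p - 1`, is `(q² - q)·p(p+1)/2 + q - 1`. -/
theorem stmt6 {p q : ℕ} [Fact p.Prime] (hp2 : 2 < p)
    (hq : q.Prime) (hq2 : 2 < q) (hqp : q ∣ p - 1) :
    Nat.card {x : GL (Fin 2) (ZMod p) | orderOf x = q}
      = (q ^ 2 - q) * (p * (p + 1) / 2) + q - 1 :=
  stmt6_general hq hqp
end

section
/- Let p be an odd prime and q a prime with q dividing p + 1 and q > 2. Then the number of subgroups of order q in GL(2, p) equals binomial(p, 2) = p(p-1)/2. -/
/-!
Over `𝔽_{p²}` an element `g` of order `q` of `GL(2, p)` has an eigenvalue `l` of order `q`. As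
`q ∤ p - 1`, `l ∉ 𝔽_p`, so a row eigenvector of `l` can be normalised to `(1, z)` with `z ∉ 𝔽_p`,
and the only other such pair `(l, z)` for `g` is its Frobenius conjugate `(l ^ p, z ^ p)`.
Conversely every pair comes from exactly one `g`: the matrix of multiplication by `l` in the
`𝔽_p`-basis `1, z` of `𝔽_{p²}`. Hence `2 · #{g | orderOf g = q} = (q - 1)(p² - p)`, while every
subgroup of order `q` contains exactly `q - 1` elements of order `q`.
-/

open Matrix Polynomial

theorem card_eq_card_mul_of_card_fiber {α β : Type*} [Finite α] [Finite β] (f : α → β) {k : ℕ}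
    (h : ∀ b, Nat.card {a // f a = b} = k) : Nat.card α = Nat.card β * k := by
  have := Fintype.ofFinite β
  rw [Nat.card_congr (Equiv.sigmaFiberEquiv f).symm, Nat.card_sigma]
  simp [h, Nat.card_eq_fintype_card]

section PrimeOrder

variable {G : Type*} [Group G] {q : ℕ}

theorem orderOf_eq_and_zpowers_eq_iff (hq : q.Prime) {H : Subgroup G} (hH : Nat.card H = q)
    {g : G} : orderOf g = q ∧ Subgroup.zpowers g = H ↔ g ∈ H ∧ g ≠ 1 := by
  constructor
  · rintro ⟨hg, rfl⟩
    exact ⟨Subgroup.mem_zpowers g, fun h => hq.one_lt.ne' (by rw [← hg, h, orderOf_one])⟩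
  · rintro ⟨hgH, hg1⟩
    have : Finite H := Nat.finite_of_card_ne_zero (hH ▸ hq.ne_zero)
    have hord : orderOf g = q :=
      (hq.eq_one_or_self_of_dvd _ (hH ▸ H.orderOf_dvd_natCard hgH)).resolve_left
        (by rwa [orderOf_eq_one_iff])
    exact ⟨hord, Subgroup.eq_of_le_of_card_ge (Subgroup.zpowers_le.2 hgH)
      (by rw [Nat.card_zpowers, hord, hH])⟩

theorem card_orderOf_eq_prime [Finite G] (hq : q.Prime) :
    Nat.card {g : G // orderOf g = q} = Nat.card {H : Subgroup G | Nat.card H = q} * (q - 1) := by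
  let gen (g : {g : G // orderOf g = q}) : {H : Subgroup G | Nat.card H = q} :=
    ⟨Subgroup.zpowers g.1, by rw [Set.mem_ofPred_eq, Nat.card_zpowers, g.2]⟩
  refine card_eq_card_mul_of_card_fiber gen fun H => ?_
  calc Nat.card {g // gen g = H}
      = Nat.card ((H.1 : Set G) \ {1} : Set G) :=
        Nat.card_congr <| (Equiv.subtypeEquivRight fun _ => Subtype.ext_iff).trans <|
          (Equiv.subtypeSubtypeEquivSubtypeInter (fun g : G => orderOf g = q)
            (fun g => Subgroup.zpowers g = H.1)).trans <|
          Equiv.subtypeEquivRight fun _ => orderOf_eq_and_zpowers_eq_iff hq H.2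
    _ = q - 1 := by
        rw [Nat.card_coe_set_eq, Set.ncard_sdiff_singleton_of_mem H.1.one_mem,
          ← Nat.card_coe_set_eq]
        exact congrArg (· - 1) H.2

end PrimeOrder

theorem pow_ne_self_of_coprime {G : Type*} [Group G] {x : G} {n : ℕ} (hn : 0 < n) (hx : x ≠ 1)
    (h : (orderOf x).Coprime (n - 1)) : x ^ n ≠ x := by
  intro hxn
  have : x ^ (n - 1) = 1 := by
    rw [← mul_left_inj x, ← pow_succ, Nat.sub_add_cancel hn, hxn, one_mul]
  exact hx (orderOf_eq_one_iff.1 (h.eq_one_of_dvd (orderOf_dvd_of_pow_eq_one this)))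

theorem Matrix.exists_det_sub_scalar_eq_zero {K n : Type*} [Field K] [Fintype n] [DecidableEq n]
    {M : Matrix n n K} {ζ : K} {q : ℕ} (hq : 0 < q) (hζ : IsPrimitiveRoot ζ q) (hM : M ^ q = 1)
    (hM1 : M ≠ 1) : ∃ μ : K, μ ^ q = 1 ∧ μ ≠ 1 ∧ (M - scalar n μ).det = 0 := by
  classical
  by_contra! h
  have aeval_sub (μ : K) : aeval M (X - C μ) = M - scalar n μ := by
    simp [Algebra.algebraMap_eq_smul_one, smul_one_eq_diagonal]
  set P := ∏ μ ∈ (nthRootsFinset q (1 : K)).erase 1, (X - C μ)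
  have hP : IsUnit (aeval M P) := by
    rw [isUnit_iff_isUnit_det, isUnit_iff_ne_zero]
    -- the matrix ring is not commutative, so split the product only after taking determinants
    change detMonoidHom.comp (aeval M).toRingHom.toMonoidHom P ≠ 0
    rw [map_prod, Finset.prod_ne_zero_iff]
    intro μ hμ
    simpa [aeval_sub] using
      h μ ((mem_nthRootsFinset hq 1).1 (Finset.mem_of_mem_erase hμ)) (Finset.ne_of_mem_erase hμ)
  -- `(M - 1) * P(M) = M ^ q - 1 = 0` with `P(M)` invertible
  have hfactor := congrArg (aeval M) (X_pow_sub_one_eq_prod hq hζ)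
  rw [← Finset.mul_prod_erase _ _ ((mem_nthRootsFinset hq 1).2 (one_pow q)), map_mul, aeval_sub,
    map_sub, map_pow, aeval_X, map_one, hM, sub_self, eq_comm, hP.mul_left_eq_zero, sub_eq_zero,
    map_one] at hfactor
  exact hM1 hfactor

section FieldExtension

variable {F K : Type*} [Field F] [Field K] [Algebra F K]

theorem linearIndependent_one_of_notMem_range {z : K} (hz : z ∉ Set.range (algebraMap F K)) :
    LinearIndependent F ![1, z] := by
  refine LinearIndependent.pair_iff.2 fun s t hst => ?_
  rw [Algebra.smul_def, Algebra.smul_def, mul_one] at hst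
  by_cases ht : t = 0
  · subst ht
    simpa using hst
  · refine absurd ⟨-(s / t), ?_⟩ hz
    rw [map_neg, map_div₀, neg_eq_iff_eq_neg, div_eq_iff ((_root_.map_ne_zero _).2 ht)]
    linear_combination hst

noncomputable def pairBasis (hK : Module.finrank F K = 2) {z : K}
    (hz : z ∉ Set.range (algebraMap F K)) : Module.Basis (Fin 2) F K :=
  basisOfLinearIndependentOfCardEqFinrank (linearIndependent_one_of_notMem_range hz) (by simp [hK])

theorem coe_pairBasis (hK : Module.finrank F K = 2) {z : K} (hz : z ∉ Set.range (algebraMap F K)) :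
    ⇑(pairBasis hK hz) = ![1, z] :=
  coe_basisOfLinearIndependentOfCardEqFinrank _ _

theorem Module.Basis.vecMul_map_algebraMap {ι : Type*} [Fintype ι] (b : Module.Basis ι F K)
    (N : Matrix ι ι F) (j : ι) :
    (⇑b ᵥ* N.map (algebraMap F K)) j = b.equivFun.symm (fun i => N i j) := by
  simp [vecMul, dotProduct, Module.Basis.equivFun_symm_apply, Algebra.smul_def, mul_comm]

theorem Module.Basis.vecMul_map_algebraMap_eq_smul_iff {ι : Type*} [Fintype ι] [DecidableEq ι]
    (b : Module.Basis ι F K) (N : Matrix ι ι F) (x : K) :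
    ⇑b ᵥ* N.map (algebraMap F K) = x • ⇑b ↔ Algebra.leftMulMatrix b x = N := by
  have hx (j : ι) : x * b j = b.equivFun.symm (fun i => Algebra.leftMulMatrix b x i j) := by
    simp [Algebra.leftMulMatrix_eq_repr_mul, b.equivFun_symm_apply, b.sum_repr]
  simp only [funext_iff, b.vecMul_map_algebraMap, Pi.smul_apply, smul_eq_mul, hx,
    b.equivFun.symm.injective.eq_iff]
  exact ⟨fun h => Matrix.ext fun i j => (h j i).symm, fun h j i => by rw [h]⟩

theorem exists_vecMul_one_eq_smul {N : Matrix (Fin 2) (Fin 2) F} {μ : K}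
    (hμ : μ ∉ Set.range (algebraMap F K)) (hdet : (N.map (algebraMap F K) - scalar _ μ).det = 0) :
    ∃ z ∉ Set.range (algebraMap F K), ![1, z] ᵥ* N.map (algebraMap F K) = μ • ![1, z] := by
  obtain ⟨v, hv, hvN⟩ := exists_vecMul_eq_zero_iff.2 hdet
  rw [vecMul_sub, sub_eq_zero, scalar_apply] at hvN
  have hvN' : v ᵥ* N.map (algebraMap F K) = μ • v := by
    rw [hvN]; ext i; simp [vecMul_diagonal, mul_comm]
  have h0 : v 0 * algebraMap F K (N 0 0) + v 1 * algebraMap F K (N 1 0) = μ * v 0 := by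
    simpa [vecMul, dotProduct, Fin.sum_univ_two] using congrFun hvN' 0
  have h1 : v 0 * algebraMap F K (N 0 1) + v 1 * algebraMap F K (N 1 1) = μ * v 1 := by
    simpa [vecMul, dotProduct, Fin.sum_univ_two] using congrFun hvN' 1
  have hv0 : v 0 ≠ 0 := by
    intro hv0
    have hv1 : v 1 ≠ 0 := fun hv1 => hv (by ext i; fin_cases i <;> assumption)
    refine hμ ⟨N 1 1, mul_left_cancel₀ hv1 ?_⟩
    rw [hv0, zero_mul, zero_add] at h1
    linear_combination h1
  have hvz : ![1, v 1 / v 0] = (v 0)⁻¹ • v := by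
    ext i; fin_cases i <;> simp [hv0, div_eq_inv_mul]
  refine ⟨v 1 / v 0, fun ⟨a, ha⟩ => hμ ⟨N 0 0 + a * N 1 0, ?_⟩, ?_⟩
  · rw [map_add, map_mul, ha]
    field_simp
    linear_combination h0
  · rw [hvz, smul_vecMul, hvN', smul_comm]

theorem AlgHom.comp_vecMul_map_algebraMap {L m n : Type*} [Field L] [Algebra F L] [Fintype m]
    (σ : K →ₐ[F] L) (v : m → K) (N : Matrix m n F) :
    σ ∘ (v ᵥ* N.map (algebraMap F K)) = (σ ∘ v) ᵥ* N.map (algebraMap F L) := by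
  ext j
  simp [vecMul, dotProduct, map_sum]

end FieldExtension

theorem eq_and_eq_or_eq_and_eq_of_vecMul_eq_smul {K : Type*} [Field K]
    {M : Matrix (Fin 2) (Fin 2) K} {μ₁ μ₂ μ₃ z₁ z₂ z₃ : K} (h₁ : ![1, z₁] ᵥ* M = μ₁ • ![1, z₁])
    (h₂ : ![1, z₂] ᵥ* M = μ₂ • ![1, z₂]) (h₃ : ![1, z₃] ᵥ* M = μ₃ • ![1, z₃]) (hμ : μ₁ ≠ μ₂) :
    μ₃ = μ₁ ∧ z₃ = z₁ ∨ μ₃ = μ₂ ∧ z₃ = z₂ := by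
  have eig {μ z : K} (h : ![1, z] ᵥ* M = μ • ![1, z]) :
      M 0 0 + z * M 1 0 = μ ∧ M 0 1 + z * M 1 1 = μ * z := by
    exact ⟨by simpa [vecMul, dotProduct, Fin.sum_univ_two] using congrFun h 0,
      by simpa [vecMul, dotProduct, Fin.sum_univ_two] using congrFun h 1⟩
  obtain ⟨a₁, b₁⟩ := eig h₁
  obtain ⟨a₂, b₂⟩ := eig h₂
  obtain ⟨a₃, b₃⟩ := eig h₃
  have hz : z₁ ≠ z₂ := by rintro rfl; exact hμ (a₁.symm.trans a₂)
  have hc : M 1 0 ≠ 0 := fun hc => hμ (by rw [← a₁, ← a₂, hc]; ring)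
  -- each slope `z` is a root of the quadratic `M 1 0 * z ^ 2 + (M 0 0 - M 1 1) * z - M 0 1`
  have key : M 1 0 * (z₁ - z₂) * ((z₃ - z₁) * (z₃ - z₂)) = 0 := by
    linear_combination (z₁ - z₂) * (z₃ * a₃ - b₃) - (z₃ - z₂) * (z₁ * a₁ - b₁) +
      (z₃ - z₁) * (z₂ * a₂ - b₂)
  rcases mul_eq_zero.1 ((mul_eq_zero.1 key).resolve_left (mul_ne_zero hc (sub_ne_zero.2 hz)))
    with h | h
  · left
    obtain rfl := sub_eq_zero.1 h
    exact ⟨a₃.symm.trans a₁, rfl⟩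
  · right
    obtain rfl := sub_eq_zero.1 h
    exact ⟨a₃.symm.trans a₂, rfl⟩

theorem Nat.coprime_sub_one_of_dvd_add_one {p q : ℕ} (hq : q.Prime) (hq2 : 2 < q)
    (hqp : q ∣ p + 1) : q.Coprime (p - 1) :=
  hq.coprime_iff_not_dvd.2 fun h =>
    absurd (Nat.le_of_dvd (by omega) (Nat.dvd_sub hqp h)) (by omega)

theorem frobeniusAlgEquivOfAlgebraic_zmod_apply {p : ℕ} [Fact p.Prime] {L : Type*} [Field L]
    [Algebra (ZMod p) L] [Algebra.IsAlgebraic (ZMod p) L] (x : L) :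
    FiniteField.frobeniusAlgEquivOfAlgebraic (ZMod p) L x = x ^ p := by
  rw [FiniteField.coe_frobeniusAlgEquivOfAlgebraic, ZMod.card]

section GaloisField

variable {p q : ℕ} [Fact p.Prime]

local notation "K" => GaloisField p 2
local notation "σ" => FiniteField.frobeniusAlgEquivOfAlgebraic (ZMod p) (GaloisField p 2)

theorem card_units_galoisField : Nat.card Kˣ = (p + 1) * (p - 1) := by
  rw [Nat.card_units, GaloisField.card p 2 two_ne_zero, ← Nat.sq_sub_sq, one_pow]

theorem pow_char_ne_self_of_orderOf_eq (hq : q.Prime) (hcop : q.Coprime (p - 1)) {l : Kˣ}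
    (hl : orderOf l = q) : (l : K) ^ p ≠ l := fun h =>
  pow_ne_self_of_coprime (Fact.out : p.Prime).pos
    (by rintro rfl; exact hq.one_lt.ne' (hl ▸ orderOf_one)) (hl ▸ hcop)
    (Units.ext (by simpa using h))

theorem notMem_range_of_orderOf_eq (hq : q.Prime) (hcop : q.Coprime (p - 1)) {l : Kˣ}
    (hl : orderOf l = q) : (l : K) ∉ Set.range (algebraMap (ZMod p) K) := by
  rintro ⟨a, ha⟩
  exact pow_char_ne_self_of_orderOf_eq hq hcop hl (by rw [← ha, ← map_pow, ZMod.pow_card])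

variable (p q) in
/-- An eigenvalue `l` of order `q` together with the slope `z ∉ 𝔽_p` of a row eigenvector `(1, z)`.
Row rather than column eigenvectors, so that `toGL` is `Algebra.leftMulMatrix`. -/
abbrev Eigenpair :=
  {s : (GaloisField p 2)ˣ × GaloisField p 2 //
    orderOf s.1 = q ∧ s.2 ∉ Set.range (algebraMap (ZMod p) (GaloisField p 2))}

namespace Eigenpair

def IsEigenpairOf (s : Eigenpair p q) (g : GL (Fin 2) (ZMod p)) : Prop :=
  ![1, s.1.2] ᵥ* (g : Matrix (Fin 2) (Fin 2) (ZMod p)).map (algebraMap (ZMod p) K) =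
    (s.1.1 : K) • ![1, s.1.2]

noncomputable def toGL (s : Eigenpair p q) : {g : GL (Fin 2) (ZMod p) // orderOf g = q} :=
  ⟨Units.map (Algebra.leftMulMatrix (pairBasis (GaloisField.finrank p two_ne_zero) s.2.2) :
      K →* Matrix (Fin 2) (Fin 2) (ZMod p)) s.1.1,
    (orderOf_injective _ (Units.map_injective (Algebra.leftMulMatrix_injective _)) _).trans s.2.1⟩

theorem toGL_eq_iff {s : Eigenpair p q} {g : GL (Fin 2) (ZMod p)} :
    (s.toGL : GL (Fin 2) (ZMod p)) = g ↔ s.IsEigenpairOf g := by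
  rw [Units.ext_iff, IsEigenpairOf, ← coe_pairBasis (GaloisField.finrank p two_ne_zero) s.2.2,
    Module.Basis.vecMul_map_algebraMap_eq_smul_iff]
  rfl

noncomputable def frob (s : Eigenpair p q) : Eigenpair p q :=
  ⟨(Units.map (σ : K →* K) s.1.1, σ s.1.2),
    (orderOf_injective _ (Units.map_injective (σ).injective) _).trans s.2.1,
    fun ⟨a, ha⟩ => s.2.2 ⟨a, (σ).injective (by rw [AlgEquiv.commutes]; exact ha)⟩⟩

theorem coe_frob_fst (s : Eigenpair p q) : (s.frob.1.1 : K) = (s.1.1 : K) ^ p :=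
  frobeniusAlgEquivOfAlgebraic_zmod_apply _

theorem frob_snd (s : Eigenpair p q) : s.frob.1.2 = s.1.2 ^ p :=
  frobeniusAlgEquivOfAlgebraic_zmod_apply _

theorem frob_ne (hq : q.Prime) (hcop : q.Coprime (p - 1)) (s : Eigenpair p q) : s.frob ≠ s :=
  fun h => pow_char_ne_self_of_orderOf_eq hq hcop s.2.1 <| by rw [← coe_frob_fst, h]

theorem IsEigenpairOf.frob {s : Eigenpair p q} {g : GL (Fin 2) (ZMod p)}
    (h : s.IsEigenpairOf g) : s.frob.IsEigenpairOf g := by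
  have := congrArg ((σ : K →ₐ[ZMod p] K) ∘ ·) h
  rw [AlgHom.comp_vecMul_map_algebraMap] at this
  unfold IsEigenpairOf
  convert this using 2 <;> ext i <;> fin_cases i <;> simp [coe_frob_fst, frob_snd, mul_pow]

theorem eq_or_eq_frob_of_isEigenpairOf (hq : q.Prime) (hcop : q.Coprime (p - 1))
    {s t : Eigenpair p q} {g : GL (Fin 2) (ZMod p)} (hs : s.IsEigenpairOf g)
    (ht : t.IsEigenpairOf g) : t = s ∨ t = s.frob := by
  have hne : (s.1.1 : K) ≠ s.frob.1.1 := by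
    rw [coe_frob_fst]; exact (pow_char_ne_self_of_orderOf_eq hq hcop s.2.1).symm
  refine (eq_and_eq_or_eq_and_eq_of_vecMul_eq_smul hs hs.frob ht hne).imp ?_ ?_ <;>
    exact fun ⟨hl, hz⟩ => Subtype.ext (Prod.ext (Units.ext hl) hz)

theorem exists_isEigenpairOf (hq : q.Prime) (hcop : q.Coprime (p - 1)) (hqp : q ∣ p + 1)
    {g : GL (Fin 2) (ZMod p)} (hg : orderOf g = q) : ∃ s : Eigenpair p q, s.IsEigenpairOf g := by
  have := Fact.mk hq
  set M := (algebraMap (ZMod p) K).mapMatrix (g : Matrix (Fin 2) (Fin 2) (ZMod p))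
  have hM : M ^ q = 1 := by
    rw [← map_pow, ← Units.val_pow_eq_pow_val, ← hg, pow_orderOf_eq_one, Units.val_one, map_one]
  have hM1 : M ≠ 1 := fun h => hq.one_lt.ne' <| hg ▸ orderOf_eq_one_iff.2
    (Units.ext <| RingHom.injective _ (h.trans (map_one _).symm))
  obtain ⟨ζ, hζ⟩ := exists_prime_orderOf_dvd_card' (G := Kˣ) (p := q)
    (by rw [card_units_galoisField]; exact Dvd.dvd.mul_right hqp _)
  obtain ⟨μ, hμq, hμ1, hdet⟩ := exists_det_sub_scalar_eq_zero hq.pos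
    (by rw [← hζ, ← orderOf_units]; exact IsPrimitiveRoot.orderOf _) hM hM1
  set l := (IsUnit.of_pow_eq_one hμq hq.ne_zero).unit
  have hl : orderOf l = q := orderOf_eq_prime (Units.ext (by simpa [l] using hμq))
    (by simpa [Units.ext_iff, l] using hμ1)
  obtain ⟨z, hz, hzM⟩ := exists_vecMul_one_eq_smul (notMem_range_of_orderOf_eq hq hcop hl) hdet
  exact ⟨⟨(l, z), hl, hz⟩, hzM⟩

theorem card_toGL_fiber (hq : q.Prime) (hcop : q.Coprime (p - 1)) (hqp : q ∣ p + 1)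
    (g : {g : GL (Fin 2) (ZMod p) // orderOf g = q}) :
    Nat.card {s : Eigenpair p q // s.toGL = g} = 2 := by
  obtain ⟨s, hs⟩ := exists_isEigenpairOf hq hcop hqp g.2
  have hfiber : {t : Eigenpair p q | t.toGL = g} = {s, s.frob} := by
    ext t
    simp only [Set.mem_ofPred_eq, Set.mem_insert_iff, Set.mem_singleton_iff]
    rw [Subtype.ext_iff, toGL_eq_iff]
    refine ⟨eq_or_eq_frob_of_isEigenpairOf hq hcop hs, ?_⟩
    rintro (rfl | rfl)
    exacts [hs, hs.frob]
  rw [← Set.coe_ofPred, Nat.card_coe_set_eq, hfiber, Set.ncard_pair (frob_ne hq hcop s).symm]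

end Eigenpair

theorem card_eigenpair (hq : q.Prime) (hqp : q ∣ p + 1) :
    Nat.card (Eigenpair p q) = (q - 1) * (p ^ 2 - p) := by
  classical
  have := Fintype.ofFinite Kˣ
  refine (Nat.card_congr (Equiv.subtypeProdEquivProd (p := fun l : Kˣ => orderOf l = q)
    (q := fun z : K => z ∉ Set.range (algebraMap (ZMod p) K)))).trans ?_
  rw [Nat.card_prod]
  congr 1
  · rw [Nat.card_eq_fintype_card, Fintype.card_subtype, IsCyclic.card_orderOf_eq_totient,
      Nat.totient_prime hq]
    rw [← Nat.card_eq_fintype_card, card_units_galoisField]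
    exact Dvd.dvd.mul_right hqp _
  · change Nat.card ↥(Set.range (algebraMap (ZMod p) K))ᶜ = _
    rw [Nat.card_coe_set_eq, Set.ncard_compl, ← Nat.card_coe_set_eq,
      Nat.card_range_of_injective (algebraMap (ZMod p) K).injective, Nat.card_zmod,
      GaloisField.card p 2 two_ne_zero]

end GaloisField

theorem stmt8_general {p q : ℕ} [Fact p.Prime]
    (hq : q.Prime) (hq2 : 2 < q) (hqp : q ∣ p + 1) :
    Nat.card {H : Subgroup (GL (Fin 2) (ZMod p)) | Nat.card H = q}
      = p * (p - 1) / 2 := by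
  have hcop := Nat.coprime_sub_one_of_dvd_add_one hq hq2 hqp
  have hcount := card_eq_card_mul_of_card_fiber Eigenpair.toGL
    (Eigenpair.card_toGL_fiber hq hcop hqp)
  rw [card_eigenpair hq hqp, card_orderOf_eq_prime hq] at hcount
  have hcard : Nat.card {H : Subgroup (GL (Fin 2) (ZMod p)) | Nat.card H = q} * 2 = p ^ 2 - p :=
    Nat.eq_of_mul_eq_mul_left (Nat.sub_pos_of_lt hq.one_lt) (by rw [hcount]; ring)
  rw [Nat.mul_sub_one, ← sq]
  exact (Nat.div_eq_of_eq_mul_left two_pos hcard.symm).symm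

/-- For `p` an odd prime and `q > 2` a prime dividing `p + 1`, the number of
subgroups of order `q` in `GL(2,p)` is `p(p-1)/2 = binomial(p,2)`. -/
theorem stmt8 {p q : ℕ} [Fact p.Prime] (hp2 : 2 < p)
    (hq : q.Prime) (hq2 : 2 < q) (hqp : q ∣ p + 1) :
    Nat.card {H : Subgroup (GL (Fin 2) (ZMod p)) | Nat.card H = q}
      = p * (p - 1) / 2 :=
  stmt8_general hq hq2 hqp
end

section
/- Let G be a group of order p²q where p > 2, with elementary abelian characteristic Sylow p-subgroup A, and suppose every p-element of Aut(G) of order p is an inner automorphism by an element of A (i.e., the Sylow p-subgroup of Aut(G) equals ι(A)). If γ is a gamma function on G, then the restriction of γ to A is a group homomorphism A → Aut(G), and there exists σ ∈ End(A) with γ(a) = ι(a^{-σ}) for all a ∈ A. -/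
/-!
The rule `γ (γ h g * h) = γ g * γ h` makes `γ '' A` closed under multiplication, hence a finite
subgroup of `Aut G`, and `k ↦ γ b k * b` maps the fibre of `γ|_A` over `1` onto the fibre over
`γ b`. So `|γ '' A|` divides `|A| = p²`, and `γ '' A` lies in a Sylow `p`-subgroup of `Aut G`,
i.e. in `ι(A)`. As `A` is abelian, `ι(A)` fixes `A` pointwise, so on `A` the rule reads
`γ (a * b) = γ a * γ b`. Since `Z(G) = 1`, `ι` is injective and `γ|_A` factors through
`ι : A ≃ ι(A)`.
-/

theorem Submonoid.inv_mem_of_finite {G : Type*} [Group G] {M : Submonoid G}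
    (hM : (M : Set G).Finite) {x : G} (hx : x ∈ M) : x⁻¹ ∈ M := by
  have hpow : Submonoid.powers x ≤ M := Submonoid.powers_le.mpr hx
  have hx_fin : IsOfFinOrder x := finite_powers.mp (hM.subset hpow)
  exact hpow (hx_fin.mem_powers_iff_mem_zpowers.mpr (inv_mem (Subgroup.mem_zpowers x)))

def Submonoid.toSubgroupOfFinite {G : Type*} [Group G] (M : Submonoid G)
    (hM : (M : Set G).Finite) : Subgroup G :=
  { M with inv_mem' := Submonoid.inv_mem_of_finite hM }

theorem MulAut.conj_injective_of_center_eq_bot {G : Type*} [Group G]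
    (h : Subgroup.center G = ⊥) : Function.Injective (MulAut.conj : G →* MulAut G) := by
  refine (injective_iff_map_eq_one _).mpr fun x hx => ?_
  have hx_center : x ∈ Subgroup.center G := Subgroup.mem_center_iff.mpr fun g => by
    have hg : x * g * x⁻¹ = g := by simpa using congr($hx g)
    exact (mul_inv_eq_iff_eq_mul.mp hg).symm
  simpa [h] using hx_center

theorem exists_monoidHom_eq_conj_of_map_mul {G : Type*} [Group G] {γ : G → MulAut G}
    (A : Subgroup G) (hinj : Function.Injective (MulAut.conj : G →* MulAut G))
    (hle : ∀ a ∈ A, γ a ∈ A.map MulAut.conj)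
    (hmul : ∀ a ∈ A, ∀ b ∈ A, γ (a * b) = γ a * γ b) :
    ∃ σ : A →* A, ∀ a : A, γ a = MulAut.conj (σ a : G) := by
  let γA : A →* A.map MulAut.conj :=
    MonoidHom.mk' (fun a => ⟨γ a, hle a a.2⟩) fun a b => Subtype.ext (hmul a a.2 b b.2)
  let ι := A.equivMapOfInjective MulAut.conj hinj
  refine ⟨ι.symm.toMonoidHom.comp γA, fun a => ?_⟩
  exact congr_arg Subtype.val (ι.apply_symm_apply (γA a)).symm

theorem Subgroup.apply_mem_of_characteristic {G : Type*} [Group G] (A : Subgroup G)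
    [A.Characteristic] (φ : MulAut G) {a : G} (ha : a ∈ A) : φ a ∈ A :=
  Subgroup.characteristic_iff_le_comap.mp ‹_› φ ha

def IsGammaFunction {G : Type*} [Group G] (γ : G → MulAut G) : Prop :=
  ∀ g h : G, γ (γ h g * h) = γ g * γ h

namespace IsGammaFunction

variable {G : Type*} [Group G] {γ : G → MulAut G}

theorem map_one (hγ : IsGammaFunction γ) : γ 1 = 1 := by
  simpa using hγ 1 1

theorem map_mul_of_le_map_conj (hγ : IsGammaFunction γ) (A : Subgroup G) [IsMulCommutative A]
    (hle : ∀ a ∈ A, γ a ∈ A.map MulAut.conj) {a b : G} (ha : a ∈ A) (hb : b ∈ A) :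
    γ (a * b) = γ a * γ b := by
  obtain ⟨c, hc, hcb⟩ := hle b hb
  have hfix : γ b a = a := by
    rw [← hcb, MulAut.conj_apply, setLike_mul_comm hc ha, mul_inv_cancel_right]
  simpa only [hfix] using hγ a b

section Characteristic

variable (A : Subgroup G) [A.Characteristic]

def imageSubmonoid (hγ : IsGammaFunction γ) : Submonoid (MulAut G) where
  carrier := γ '' A
  mul_mem' := by
    rintro _ _ ⟨a, ha, rfl⟩ ⟨b, hb, rfl⟩
    exact ⟨γ b a * b, A.mul_mem (A.apply_mem_of_characteristic (γ b) ha) hb, hγ a b⟩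
  one_mem' := ⟨1, A.one_mem, hγ.map_one⟩

def fiberEquivKer (hγ : IsGammaFunction γ) (b : A) :
    {a : A // γ a = γ b} ≃ {k : A // γ k = 1} where
  toFun a := ⟨⟨(γ b)⁻¹ (a * (b : G)⁻¹),
    A.apply_mem_of_characteristic _ (A.mul_mem a.1.2 (A.inv_mem b.2))⟩, by
    have h := hγ ((γ b)⁻¹ (a * (b : G)⁻¹)) b
    rwa [MulAut.apply_inv_self, inv_mul_cancel_right, a.2, right_eq_mul] at h⟩
  invFun k := ⟨⟨γ b k * b, A.mul_mem (A.apply_mem_of_characteristic (γ b) k.1.2) b.2⟩, by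
    simp only [hγ k b, k.2, one_mul]⟩
  left_inv a := by ext; simp
  right_inv k := by ext; simp

theorem card_eq_card_image_mul_card_ker (hγ : IsGammaFunction γ) :
    Nat.card A = Nat.card (γ '' A) * Nat.card {k : A // γ k = 1} := by
  let f : A → γ '' A := fun a => ⟨γ a, a, a.2, rfl⟩
  have hf : Function.Surjective f := by
    rintro ⟨_, a, ha, rfl⟩
    exact ⟨⟨a, ha⟩, rfl⟩
  choose b hb using hf
  have e : ∀ c, {a // f a = c} ≃ {k : A // γ k = 1} := fun c =>
    (Equiv.subtypeEquivRight fun a => by nth_rw 1 [← hb c]; exact Subtype.ext_iff).trans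
      (hγ.fiberEquivKer A (b c))
  rw [← Nat.card_prod]
  exact Nat.card_congr ((Equiv.sigmaFiberEquiv f).symm.trans (Equiv.sigmaEquivProdOfEquiv e))

variable [Finite A]

def imageSubgroup (hγ : IsGammaFunction γ) : Subgroup (MulAut G) :=
  (hγ.imageSubmonoid A).toSubgroupOfFinite ((Set.toFinite _).image γ)

theorem isPGroup_imageSubgroup (hγ : IsGammaFunction γ) {p n : ℕ} (hA : Nat.card A = p ^ n) :
    IsPGroup p (hγ.imageSubgroup A) :=
  IsPGroup.of_card_dvd_pow (n := n) <| by
    rw [← hA, hγ.card_eq_card_image_mul_card_ker A]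
    exact dvd_mul_right _ _

end Characteristic

end IsGammaFunction

/-- The paper's `ι(x)` is `g ↦ x⁻¹ g x`, so its `ι(σ(a)⁻¹)` is `MulAut.conj (σ a)` here. -/
theorem stmt14_general {G : Type*} [Group G] {p : ℕ}
    (hp : p.Prime)
    (A : Subgroup G) [A.Characteristic]
    (hA : Nat.card A = p ^ 2)
    (hcenter : Subgroup.center G = ⊥)
    (hSyl : ∀ P : Sylow p (MulAut G),
      (P : Subgroup (MulAut G)) = Subgroup.map (MulAut.conj : G →* MulAut G) A)
    (γ : G → MulAut G)
    (hGFE : ∀ g h : G, γ (γ h g * h) = γ g * γ h) :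
    (∀ a ∈ A, ∀ b ∈ A, γ (a * b) = γ a * γ b) ∧
    ∃ σ : A →* A, ∀ a : A, γ (a : G) = MulAut.conj ((σ a : G)) := by
  have hγ : IsGammaFunction γ := hGFE
  have : Fact p.Prime := ⟨hp⟩
  have : Finite A := Nat.finite_of_card_ne_zero (by rw [hA]; exact pow_ne_zero 2 hp.ne_zero)
  have : IsMulCommutative A := IsPGroup.isMulCommutative_of_card_eq_prime_sq hA
  obtain ⟨P, hP⟩ := (hγ.isPGroup_imageSubgroup A hA).exists_le_sylow
  have hle : ∀ a ∈ A, γ a ∈ A.map MulAut.conj := fun a ha => hSyl P ▸ hP ⟨a, ha, rfl⟩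
  have hmul : ∀ a ∈ A, ∀ b ∈ A, γ (a * b) = γ a * γ b := fun a ha b hb =>
    hγ.map_mul_of_le_map_conj A hle ha hb
  exact ⟨hmul, exists_monoidHom_eq_conj_of_map_mul A
    (MulAut.conj_injective_of_center_eq_bot hcenter) hle hmul⟩

/-- If `G` has order `p²q` (`p > 2`, `q ∣ p - 1`), trivial centre, a
characteristic elementary abelian Sylow `p`-subgroup `A`, and the Sylow
`p`-subgroup of `Aut(G)` equals `ι(A)` (inner automorphisms by elements of
`A`), then for any gamma function `γ` on `G`, the restriction of `γ` to `A` is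
a homomorphism, given by `γ(a) = ι(σ(a)⁻¹)` for some endomorphism `σ` of `A`
(note `ι(σ(a)⁻¹) = MulAut.conj (σ a)` since `ι(x) : g ↦ x⁻¹ g x`). -/
theorem stmt14 {G : Type*} [Group G] [Fintype G] {p q : ℕ}
    (hp : p.Prime) (hq : q.Prime) (hp2 : 2 < p) (hqp : q ∣ p - 1)
    (hcard : Fintype.card G = p ^ 2 * q)
    (A : Subgroup G) [A.Characteristic]
    (hA : Nat.card A = p ^ 2) (hel : ∀ x ∈ A, x ^ p = 1)
    (hcenter : Subgroup.center G = ⊥)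
    (hSyl : ∀ P : Sylow p (MulAut G),
      (P : Subgroup (MulAut G)) = Subgroup.map (MulAut.conj : G →* MulAut G) A)
    (γ : G → MulAut G)
    (hGFE : ∀ g h : G, γ (γ h g * h) = γ g * γ h) :
    (∀ a ∈ A, ∀ b ∈ A, γ (a * b) = γ a * γ b) ∧
    ∃ σ : A →* A, ∀ a : A, γ (a : G) = MulAut.conj ((σ a : G)) :=
  stmt14_general hp A hA hcenter hSyl γ hGFE
end

section
/- Let G = C_p × C_p × C_q with p > 2, A its Sylow p-subgroup, B = ⟨b⟩ its Sylow q-subgroup, and γ a gamma function on G. If the group (G, ∘) with g ∘ h = γ(h)(g)·h is abelian, then B ≤ ker(γ) and γ(a) restricted to B is trivial for all a ∈ A. -/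
/-! Commutativity of `∘` reads `γ(h)(g) / g = γ(g)(h) / h`. In an abelian group a subgroup whose
order is coprime to its index is the set of solutions of `x ^ |H| = 1`, so `A` and `B = ⟨b⟩` are
preserved by every `γ(g)`. For `a ∈ A` and `x ∈ B` the two sides of the identity then lie in `A`
and in `B` respectively, hence are trivial: `γ(x)` fixes `A` and `γ(a)` fixes `B`.

On `B` itself the identity says `γ(x)(b) / b = ψ(x)` for the endomorphism `ψ = γ(b) / id`. If
`ψ(b) ≠ 1`, it generates `B` (prime order), so `ψ(x) = b⁻¹` for some `x ∈ B`, i.e. `γ(x)(b) = 1`,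
which is impossible. Hence `ψ` is trivial on `B` and every `γ(x)`, `x ∈ B`, fixes `B`; as it also
fixes `A` and `G = A B`, it is the identity. -/

theorem Subgroup.mem_iff_pow_natCard_eq_one_of_coprime {G : Type*} [CommGroup G] [Finite G]
    {H : Subgroup G} (hH : (Nat.card H).Coprime H.index) {x : G} :
    x ∈ H ↔ x ^ Nat.card H = 1 := by
  refine ⟨fun hx => congrArg Subtype.val (pow_card_eq_one' (x := (⟨x, hx⟩ : H))), fun hx => ?_⟩
  have h_index : (x : G ⧸ H) ^ H.index = 1 := by
    rw [Subgroup.index_eq_card]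
    exact pow_card_eq_one'
  have h_card : (x : G ⧸ H) ^ Nat.card H = 1 := by
    rw [← QuotientGroup.mk_pow, hx, QuotientGroup.mk_one]
  rw [← QuotientGroup.eq_one_iff]
  simpa [hH] using pow_gcd_eq_one.mpr ⟨h_card, h_index⟩

theorem Subgroup.apply_mem_of_coprime_index {G F : Type*} [CommGroup G] [Finite G]
    [FunLike F G G] [MonoidHomClass F G G] {H : Subgroup G} (hH : (Nat.card H).Coprime H.index)
    (f : F) {x : G} (hx : x ∈ H) : f x ∈ H := by
  rw [Subgroup.mem_iff_pow_natCard_eq_one_of_coprime hH] at hx ⊢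
  rw [← map_pow, hx, map_one]

section CommutativeCircle

open Subgroup

variable {G : Type*} [CommGroup G] {γ : G → MulAut G}
  (hcomm : ∀ g h : G, γ h g * h = γ g h * g)
include hcomm

theorem gamma_apply_div_comm (g h : G) : γ h g / g = γ g h / h :=
  div_eq_div_iff_mul_eq_mul.mpr (hcomm g h)

theorem gamma_apply_eq_self_of_disjoint {H K : Subgroup G} (hHK : Disjoint H K)
    (hH : ∀ g, ∀ x ∈ H, γ g x ∈ H) (hK : ∀ g, ∀ x ∈ K, γ g x ∈ K)
    {a x : G} (ha : a ∈ H) (hx : x ∈ K) : γ x a = a ∧ γ a x = x := by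
  have hdiv := gamma_apply_div_comm hcomm a x
  have hdiv_mem_H : γ x a / a ∈ H := H.div_mem (hH x a ha) ha
  have hdiv_mem_K : γ x a / a ∈ K := hdiv ▸ K.div_mem (hK a x hx) hx
  have hdiv_one : γ x a / a = 1 := disjoint_def.mp hHK hdiv_mem_H hdiv_mem_K
  exact ⟨div_eq_one.mp hdiv_one, div_eq_one.mp (hdiv ▸ hdiv_one)⟩

theorem gamma_apply_eq_self_of_orderOf_prime {b : G} {q : ℕ} (hq : q.Prime)
    (hb : orderOf b = q) (hbb : γ b b ∈ zpowers b) {x y : G} (hx : x ∈ zpowers b)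
    (hy : y ∈ zpowers b) : γ x y = y := by
  let ψ : G →* G := (γ b).toMonoidHom / MonoidHom.id G
  have hψ (g : G) : ψ g = γ g b / b := gamma_apply_div_comm hcomm g b
  have hψb : ψ b = 1 := by
    by_contra hne
    have := Fact.mk hq
    have : Finite (zpowers b) :=
      Nat.finite_of_card_ne_zero (by rw [Nat.card_zpowers, hb]; exact hq.ne_zero)
    have hord : orderOf (ψ b) = q :=
      orderOf_eq_prime (by rw [← map_pow, ← hb, pow_orderOf_eq_one, map_one]) hne
    have hψb_mem : ψ b ∈ zpowers b := (zpowers b).div_mem hbb (mem_zpowers b)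
    have hgen : zpowers (ψ b) = zpowers b := eq_of_le_of_card_ge (zpowers_le.mpr hψb_mem)
      (by rw [Nat.card_zpowers, Nat.card_zpowers, hord, hb])
    obtain ⟨k, hk⟩ := mem_zpowers_iff.mp (hgen ▸ inv_mem (mem_zpowers b))
    rw [← map_zpow, hψ, div_eq_inv_self, MulEquiv.map_eq_one_iff] at hk
    exact hq.one_lt.ne' (hb ▸ hk ▸ orderOf_one)
  obtain ⟨k, rfl⟩ := mem_zpowers_iff.mp hx
  have hfix : γ (b ^ k) b = b := by rw [← div_eq_one, ← hψ, map_zpow, hψb, one_zpow]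
  obtain ⟨j, rfl⟩ := mem_zpowers_iff.mp hy
  rw [map_zpow, hfix]

end CommutativeCircle

theorem stmt15_general {G : Type*} [CommGroup G] [Fintype G] {p q : ℕ}
    (hp : p.Prime) (hq : q.Prime) (hpq : p ≠ q)
    (hcard : Fintype.card G = p ^ 2 * q)
    (A : Subgroup G) (hA : Nat.card A = p ^ 2)
    (b : G) (hb : orderOf b = q)
    (γ : G → MulAut G)
    (hcommirc : ∀ g h : G, γ h g * h = γ g h * g) :
    (∀ x ∈ Subgroup.zpowers b, γ x = 1) ∧
    (∀ a ∈ A, ∀ x ∈ Subgroup.zpowers b, γ a x = x) := by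
  have hcop : (Nat.card A).Coprime (Nat.card (Subgroup.zpowers b)) := by
    rw [hA, Nat.card_zpowers, hb]
    exact ((Nat.coprime_primes hp hq).mpr hpq).pow_left 2
  have hcompl : A.IsComplement' (Subgroup.zpowers b) := Subgroup.isComplement'_of_coprime
    (by rw [hA, Nat.card_zpowers, hb, Nat.card_eq_fintype_card, hcard]) hcop
  have hA_inv (g x : G) : x ∈ A → γ g x ∈ A :=
    Subgroup.apply_mem_of_coprime_index (by rwa [hcompl.symm.index_eq_card]) (γ g)
  have hB_inv (g x : G) : x ∈ Subgroup.zpowers b → γ g x ∈ Subgroup.zpowers b :=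
    Subgroup.apply_mem_of_coprime_index (by rw [hcompl.index_eq_card]; exact hcop.symm) (γ g)
  have hfix {a x : G} (ha : a ∈ A) (hx : x ∈ Subgroup.zpowers b) :=
    gamma_apply_eq_self_of_disjoint hcommirc hcompl.disjoint hA_inv hB_inv ha hx
  refine ⟨fun x hx => ?_, fun a ha x hx => (hfix ha hx).2⟩
  have hle : A ⊔ Subgroup.zpowers b ≤ (γ x).toMonoidHom.eqLocus (MonoidHom.id G) :=
    sup_le (fun a ha => (hfix ha hx).1) fun y hy =>
      gamma_apply_eq_self_of_orderOf_prime hcommirc hq hb (hB_inv b b (Subgroup.mem_zpowers b))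
        hx hy
  rw [hcompl.sup_eq_top] at hle
  exact MulEquiv.ext fun g => hle (Subgroup.mem_top g)

/-- Let `G = C_p × C_p × C_q` (abelian of order `p²q` with elementary abelian
Sylow `p`-subgroup `A` and Sylow `q`-subgroup `⟨b⟩`), and let `γ` be a gamma
function on `G`. If the circle operation `g ∘ h = γ(h)(g)·h` is commutative,
then `⟨b⟩ ≤ ker γ` and `γ(a)` restricts to the identity on `⟨b⟩` for all
`a ∈ A`. -/
theorem stmt15 {G : Type*} [CommGroup G] [Fintype G] {p q : ℕ}
    (hp : p.Prime) (hq : q.Prime) (hp2 : 2 < p) (hpq : p ≠ q)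
    (hcard : Fintype.card G = p ^ 2 * q)
    (A : Subgroup G) (hA : Nat.card A = p ^ 2) (hel : ∀ x ∈ A, x ^ p = 1)
    (b : G) (hb : orderOf b = q)
    (γ : G → MulAut G)
    (hGFE : ∀ g h : G, γ (γ h g * h) = γ g * γ h)
    (hcommirc : ∀ g h : G, γ h g * h = γ g h * g) :
    (∀ x ∈ Subgroup.zpowers b, γ x = 1) ∧
    (∀ a ∈ A, ∀ x ∈ Subgroup.zpowers b, γ a x = x) :=
  stmt15_general hp hq hpq hcard A hA b hb γ hcommirc
end

section
/- Let G be a group of order p²q with elementary abelian Sylow p-subgroup A = ⟨a₁, a₂⟩, and let γ : A → Aut(G) be a map with γ(a₂) = 1 and γ(a₁) = φ where φ fixes a₂ and sends a₁ to a₁a₂^k for some k. Then [A, γ(A)] ⊆ ⟨a₂⟩, and consequently γ extends to a (unique) relative gamma function on A if and only if γ is a group homomorphism on A. -/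
/-!
Every power of `φ` moves each element of `A` only by a power of `a₂`: this holds on the
generators, `a₂` is fixed by `φ`, and `⟨a₂⟩` is central in `A`. Hence `γ(y)(x) = x a₂ᵗ` and
`γ(y)(x) y = x y a₂ᵗ` for `x, y ∈ A`. A relative gamma function satisfies
`γ(z a₂) = γ(z) γ(a₂) = γ(z)`, so it is constant on the cosets of `⟨a₂⟩` and the gamma functional
equation collapses to `γ(xy) = γ(x) γ(y)`; conversely a homomorphism kills `⟨a₂⟩`, which gives
back the functional equation.
-/

open Subgroup

section

variable {G : Type*} [Group G]

def IsRelGammaFun (A : Subgroup G) (γ : A → MulAut G) : Prop :=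
  (∀ x y : A, γ x (y : G) ∈ A) ∧
    ∀ x y : A, ∀ hm : γ y (x : G) * (y : G) ∈ A, γ ⟨γ y (x : G) * (y : G), hm⟩ = γ x * γ y

theorem closure_pair_le_centralizer_zpowers {a b : G} (h : Commute a b) :
    closure {a, b} ≤ centralizer (zpowers b) := by
  rw [closure_le, zpowers_eq_closure, centralizer_closure]
  rintro x (rfl | rfl) <;> rw [SetLike.mem_coe, mem_centralizer_singleton_iff]
  exact h.eq

theorem inv_mul_map_mem_of_mem_closure {F : Type*} [FunLike F G G] [MonoidHomClass F G G]
    (f : F) {N : Subgroup G} {S : Set G} (hSN : closure S ≤ centralizer N)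
    (hS : ∀ s ∈ S, s⁻¹ * f s ∈ N) {x : G} (hx : x ∈ closure S) : x⁻¹ * f x ∈ N := by
  have hcomm : ∀ y ∈ closure S, ∀ c ∈ N, Commute c y := fun y hy =>
    mem_centralizer_iff.1 (hSN hy)
  induction hx using closure_induction with
  | mem s hs => exact hS s hs
  | one => simp
  | mul x y _ hy ihx ihy =>
    have hxy : (x * y)⁻¹ * f (x * y) = y⁻¹ * ((x⁻¹ * f x) * y) * (y⁻¹ * f y) := by
      rw [map_mul]; group
    rw [hxy, (hcomm y hy _ ihx).eq, inv_mul_cancel_left]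
    exact mul_mem ihx ihy
  | inv x hx ih =>
    have hinv : x⁻¹⁻¹ * f x⁻¹ = x * (x⁻¹ * f x)⁻¹ * x⁻¹ := by
      rw [map_inv]; group
    rw [hinv, ← (hcomm x hx _ ih).inv_left.eq, mul_inv_cancel_right]
    exact inv_mem ih

theorem MulAut.zpow_apply_eq_mul_zpow {ψ : MulAut G} {x c : G} (hc : ψ c = c)
    (hx : ψ x = x * c) (n : ℤ) : (ψ ^ n) x = x * c ^ n := by
  induction n using Int.induction_on with
  | zero => simp
  | succ n ih =>
    rw [add_comm, zpow_one_add, MulAut.mul_apply, ih, map_mul, map_zpow, hx, hc, mul_assoc,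
      ← zpow_one_add]
  | pred n ih =>
    apply ψ.injective
    rw [← MulAut.mul_apply, ← zpow_one_add, add_sub_cancel, ih, map_mul, map_zpow, hx, hc,
      mul_assoc, ← zpow_one_add, add_sub_cancel]

theorem inv_mul_zpow_apply_mem_zpowers {ψ : MulAut G} {x b : G} (hb : ψ b = b)
    (hx : x⁻¹ * ψ x ∈ zpowers b) (n : ℤ) : x⁻¹ * (ψ ^ n) x ∈ zpowers b := by
  obtain ⟨t, ht⟩ := mem_zpowers_iff.1 hx
  have hψx : ψ x = x * b ^ t := (eq_inv_mul_iff_mul_eq.1 ht).symm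
  rw [MulAut.zpow_apply_eq_mul_zpow (by rw [map_zpow, hb]) hψx, inv_mul_cancel_left]
  exact zpow_mem (zpow_mem (mem_zpowers b) t) n

theorem apply_mul_zpow_of_apply_mul {M α : Type*} [Group M] {f : M → α} {b : M}
    (h : ∀ z, f (z * b) = f z) (z : M) (t : ℤ) : f (z * b ^ t) = f z := by
  induction t using Int.induction_on with
  | zero => simp
  | succ n ih => rw [zpow_add_one, ← mul_assoc, h, ih]
  | pred n ih => rw [← ih, ← h (z * b ^ (-(n : ℤ) - 1)), mul_assoc, ← zpow_add_one, sub_add_cancel]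

section RelGamma

variable {A : Subgroup G} {b : G} (hbA : b ∈ A) (hAb : A ≤ centralizer (zpowers b))
  {γ : A → MulAut G} (hγ : ∀ x y : A, (x : G)⁻¹ * γ y (x : G) ∈ zpowers b)
include hbA hAb hγ

theorem exists_gamma_apply_mul_eq (x y : A) :
    ∃ t : ℤ, γ y (x : G) * y = ((x * y * ⟨b, hbA⟩ ^ t : A) : G) := by
  obtain ⟨t, ht⟩ := mem_zpowers_iff.1 (hγ x y)
  refine ⟨t, ?_⟩
  rw [← eq_inv_mul_iff_mul_eq.1 ht]
  push_cast
  rw [mul_assoc, mul_assoc, mem_centralizer_iff.1 (hAb y.2) _ (zpow_mem_zpowers b t)]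

theorem isRelGammaFun_iff_map_mul (hγb : γ ⟨b, hbA⟩ = 1) :
    IsRelGammaFun A γ ↔ ∀ x y : A, γ (x * y) = γ x * γ y := by
  set b' : A := ⟨b, hbA⟩
  constructor
  · rintro ⟨-, hrel⟩ x y
    have hper : ∀ z : A, γ (z * b') = γ z := fun z => by
      have hm : γ b' (z : G) * b ∈ A := by rw [hγb]; exact (z * b').2
      calc γ (z * b') = γ ⟨γ b' (z : G) * b, hm⟩ :=
          congrArg γ (Subtype.ext (show (z : G) * b = γ b' (z : G) * b by rw [hγb]; rfl))
        _ = γ z := by rw [hrel z b' hm, hγb, mul_one]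
    obtain ⟨t, ht⟩ := exists_gamma_apply_mul_eq hbA hAb hγ x y
    calc γ (x * y) = γ (x * y * b' ^ t) := (apply_mul_zpow_of_apply_mul hper _ t).symm
      _ = γ ⟨γ y (x : G) * y, ht ▸ (x * y * b' ^ t).2⟩ := congrArg γ (Subtype.ext ht.symm)
      _ = γ x * γ y := hrel x y _
  · intro hmul
    refine ⟨fun x y => ?_, fun x y hm => ?_⟩
    · rw [← mul_inv_cancel_left (y : G) (γ x (y : G))]
      exact mul_mem y.2 (zpowers_le.2 hbA (hγ y x))
    · obtain ⟨t, ht⟩ := exists_gamma_apply_mul_eq hbA hAb hγ x y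
      have hγbt : γ (b' ^ t) = 1 := by
        rw [← MonoidHom.mk'_apply γ hmul, map_zpow, MonoidHom.mk'_apply, hγb, one_zpow]
      rw [congrArg γ (Subtype.ext ht : (⟨_, hm⟩ : A) = x * y * b' ^ t), hmul, hγbt, mul_one, hmul]

end RelGamma

end

theorem stmt18_general {G : Type*} [Group G] {k : ℕ}
    (a₁ a₂ : G)
    (hcomm : a₁ * a₂ = a₂ * a₁)
    (A : Subgroup G) (hAdef : A = Subgroup.closure {a₁, a₂})
    (h2 : a₂ ∈ A)
    (φ : MulAut G) (hφ2 : φ a₂ = a₂) (hφ1 : φ a₁ = a₁ * a₂ ^ k)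
    (γ : A → MulAut G)
    (hrange : ∀ x : A, ∃ n : ℤ, γ x = φ ^ n)
    (hγ2 : γ ⟨a₂, h2⟩ = 1) :
    (Subgroup.closure {g : G | ∃ x y : A, g = (x : G)⁻¹ * γ y (x : G)}
      ≤ Subgroup.zpowers a₂) ∧
    (((∀ x y : A, γ x (y : G) ∈ A) ∧
      (∀ x y : A, ∀ hm : γ y (x : G) * (y : G) ∈ A,
        γ ⟨γ y (x : G) * (y : G), hm⟩ = γ x * γ y)) ↔
     (∀ x y : A, γ (x * y) = γ x * γ y)) := by
  have hgen : closure {a₁, a₂} ≤ centralizer (zpowers a₂) :=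
    closure_pair_le_centralizer_zpowers hcomm
  have hAb : A ≤ centralizer (zpowers a₂) := hAdef ▸ hgen
  have hφA : ∀ x ∈ A, x⁻¹ * φ x ∈ zpowers a₂ := by
    rw [hAdef]
    refine fun x => inv_mul_map_mem_of_mem_closure φ hgen ?_
    rintro s (rfl | rfl)
    · rw [hφ1, inv_mul_cancel_left]; exact pow_mem (mem_zpowers a₂) k
    · rw [hφ2, inv_mul_cancel]; exact one_mem _
  have hγ : ∀ x y : A, (x : G)⁻¹ * γ y (x : G) ∈ zpowers a₂ := fun x y => by
    obtain ⟨n, hn⟩ := hrange y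
    rw [hn]
    exact inv_mul_zpow_apply_mem_zpowers hφ2 (hφA x x.2) n
  exact ⟨closure_le _ |>.2 (by rintro _ ⟨x, y, rfl⟩; exact hγ x y),
    isRelGammaFun_iff_map_mul h2 hAb hγ hγ2⟩

/-- Appendix Lemma: let `A = ⟨a₁, a₂⟩ ≅ C_p × C_p` be a Sylow `p`-subgroup of a
group `G` of order `p²q`, and `γ : A → Aut(G)` with values in `⟨φ⟩`, where
`γ(a₂) = 1` and `γ(a₁) = φ` with `φ(a₂) = a₂`, `φ(a₁) = a₁ a₂^k`. Then
`[A, γ(A)] ≤ ⟨a₂⟩`, and consequently `γ` is a relative gamma function on `A`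
if and only if it is a group homomorphism. -/
theorem stmt18 {G : Type*} [Group G] [Fintype G] {p q k : ℕ}
    (hp : p.Prime) (hq : q.Prime) (hp2 : 2 < p) (hpq : p ≠ q)
    (hcard : Fintype.card G = p ^ 2 * q)
    (a₁ a₂ : G) (ha₁ : orderOf a₁ = p) (ha₂ : orderOf a₂ = p)
    (hcomm : a₁ * a₂ = a₂ * a₁)
    (A : Subgroup G) (hAdef : A = Subgroup.closure {a₁, a₂})
    (h1 : a₁ ∈ A) (h2 : a₂ ∈ A) (hAcard : Nat.card A = p ^ 2)
    (φ : MulAut G) (hφ2 : φ a₂ = a₂) (hφ1 : φ a₁ = a₁ * a₂ ^ k)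
    (γ : A → MulAut G)
    (hrange : ∀ x : A, ∃ n : ℤ, γ x = φ ^ n)
    (hγ1 : γ ⟨a₁, h1⟩ = φ) (hγ2 : γ ⟨a₂, h2⟩ = 1) :
    (Subgroup.closure {g : G | ∃ x y : A, g = (x : G)⁻¹ * γ y (x : G)}
      ≤ Subgroup.zpowers a₂) ∧
    (((∀ x y : A, γ x (y : G) ∈ A) ∧
      (∀ x y : A, ∀ hm : γ y (x : G) * (y : G) ∈ A,
        γ ⟨γ y (x : G) * (y : G), hm⟩ = γ x * γ y)) ↔
     (∀ x y : A, γ (x * y) = γ x * γ y)) :=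
  stmt18_general a₁ a₂ hcomm A hAdef h2 φ hφ2 hφ1 γ hrange hγ2
end
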